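/- arXiv:cs/9903020 — 9 statements merged into one kernel-verified Lean document; each statement's English description precedes it below -/
import Mathlib

section
/- If a, b, h, v, m, n ≥ 1 are integers such that ab = amv + bnh, then there exist integers p, q, a', b' ≥ 1 satisfying: p + q = gcd(a,b), a = (p+q)a', b = (p+q)b', nh = pa', and mv = qb'. -/
/-- If `a,b,h,v,m,n ≥ 1` and `ab = amv + bnh` then there exist `p,q,a',b' ≥ 1` with
`p + q = gcd(a,b)`, `a = (p+q)a'`, `b = (p+q)b'`, `nh = pa'` and `mv = qb'`. -/
theorem stmt_0 (a b h v m n : ℕ) (ha : 1 ≤ a) (hb : 1 ≤ b) (hh : 1 ≤ h)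
    (hv : 1 ≤ v) (hm : 1 ≤ m) (hn : 1 ≤ n)
    (heq : a * b = a * m * v + b * n * h) :
    ∃ p q a' b' : ℕ, 1 ≤ p ∧ 1 ≤ q ∧ 1 ≤ a' ∧ 1 ≤ b' ∧
      p + q = Nat.gcd a b ∧ a = (p + q) * a' ∧ b = (p + q) * b' ∧
      n * h = p * a' ∧ m * v = q * b' := by
  set g := Nat.gcd a b with hg
  have hgpos : 0 < g := Nat.gcd_pos_of_pos_left _ ha
  obtain ⟨A, hA⟩ : g ∣ a := Nat.gcd_dvd_left a b
  obtain ⟨B, hB⟩ : g ∣ b := Nat.gcd_dvd_right a b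
  have hApos : 0 < A := by
    rcases Nat.eq_zero_or_pos A with h0 | h0
    · simp [h0] at hA; omega
    · exact h0
  have hBpos : 0 < B := by
    rcases Nat.eq_zero_or_pos B with h0 | h0
    · simp [h0] at hB; omega
    · exact h0
  have hcop : Nat.Coprime A B := by
    have := Nat.coprime_div_gcd_div_gcd (m := a) (n := b) hgpos
    have h1 : a / g = A := by rw [hA]; exact Nat.mul_div_cancel_left _ hgpos
    have h2 : b / g = B := by rw [hB]; exact Nat.mul_div_cancel_left _ hgpos
    rwa [h1, h2] at this
  have key : g * (A * B) = A * (m * v) + B * (n * h) := by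
    have h2 : g * (g * (A * B)) = g * (A * (m * v) + B * (n * h)) := by
      rw [hA, hB] at heq; ring_nf; ring_nf at heq; linarith [heq]
    exact Nat.eq_of_mul_eq_mul_left hgpos h2
  have hdvdA : A ∣ B * (n * h) := by
    have : B * (n * h) = g * (A * B) - A * (m * v) := by omega
    rw [this]
    exact Nat.dvd_sub ⟨g * B, by ring⟩ ⟨m * v, rfl⟩
  have hdvdB : B ∣ A * (m * v) := by
    have : A * (m * v) = g * (A * B) - B * (n * h) := by omega
    rw [this]
    exact Nat.dvd_sub ⟨g * A, by ring⟩ ⟨n * h, rfl⟩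
  obtain ⟨p, hp⟩ : A ∣ n * h := hcop.dvd_of_dvd_mul_left hdvdA
  obtain ⟨q, hq⟩ : B ∣ m * v := (hcop.symm.dvd_of_dvd_mul_left hdvdB)
  have hppos : 0 < p := by
    rcases Nat.eq_zero_or_pos p with h0 | h0
    · simp [h0] at hp; omega
    · exact h0
  have hqpos : 0 < q := by
    rcases Nat.eq_zero_or_pos q with h0 | h0
    · simp [h0] at hq; omega
    · exact h0
  have hgpq : g = p + q := by
    have : g * (A * B) = (p + q) * (A * B) := by
      rw [hp, hq] at key; ring_nf; ring_nf at key; linarith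
    exact Nat.eq_of_mul_eq_mul_right (by positivity) this
  exact ⟨p, q, A, B, hppos, hqpos, hApos, hBpos, hgpq.symm, by rw [← hgpq]; exact hA,
    by rw [← hgpq]; exact hB, by rw [hp]; ring, by rw [hq]; ring⟩
end

section
/- The torus T_{a×b} = Z_a × Z_b admits a tiling by horizontal bars of length h and vertical bars of length v such that every column contains exactly m vertical bars and every row contains exactly n horizontal bars, if and only if ab = amv + bnh. -/
/-- A bar placement on the torus `ℤ_a × ℤ_b`: `(true, i, j)` is a vertical bar
anchored at `(i,j)`, `(false, i, j)` a horizontal bar anchored at `(i,j)`. -/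
abbrev TorusBar (a b : ℕ) := Bool × ZMod a × ZMod b

/-- The set of cells covered by a bar: a horizontal bar of length `h` at `(i,j)`
covers `(i,j),(i+1,j),…,(i+h-1,j)` (mod `a`); a vertical bar of length `v` at `(i,j)`
covers `(i,j),(i,j+1),…,(i,j+v-1)` (mod `b`). -/
def torusBarCells {a b : ℕ} (h v : ℕ) (t : TorusBar a b) : Finset (ZMod a × ZMod b) :=
  if t.1 then (Finset.range v).image (fun (s : ℕ) => (t.2.1, t.2.2 + (s : ZMod b)))
  else (Finset.range h).image (fun (s : ℕ) => (t.2.1 + (s : ZMod a), t.2.2))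

/-- A tiling of the torus: every bar is a genuine copy of the `h × 1` or `1 × v` bar
(its cells are pairwise distinct), and every cell of the torus is covered by exactly
one bar of the family. -/
def IsTorusTiling {a b : ℕ} (h v : ℕ) (T : Finset (TorusBar a b)) : Prop :=
  (∀ t ∈ T, (torusBarCells h v t).card = if t.1 then v else h) ∧
  ∀ c : ZMod a × ZMod b, ∃! t, t ∈ T ∧ c ∈ torusBarCells h v t

/-- Number of vertical bars of the tiling lying in column `i`. -/
def torusVertCount {a b : ℕ} (T : Finset (TorusBar a b)) (i : ZMod a) : ℕ :=
  (T.filter (fun t => t.1 = true ∧ t.2.1 = i)).card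

/-- Number of horizontal bars of the tiling lying in row `j`. -/
def torusHorizCount {a b : ℕ} (T : Finset (TorusBar a b)) (j : ZMod b) : ℕ :=
  (T.filter (fun t => t.1 = false ∧ t.2.2 = j)).card



namespace Stmt2Aux

/-- `kk c` is the "column position" invariant: `(⌊b·i/a⌋ - j) mod b`. -/
def kk (a b : ℕ) (c : ZMod a × ZMod b) : ℕ :=
  (((b * c.1.val / a : ℕ) : ZMod b) - c.2).val

/-- `ww c` is the "row position" invariant: `(i - ⌈a·j/b⌉) mod a`. -/
def ww (a b : ℕ) (c : ZMod a × ZMod b) : ℕ :=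
  (c.1 - (((a * c.2.val + b - 1) / b : ℕ) : ZMod a)).val

theorem dich (a b q p : ℕ) (ha : 0 < a) (hb : 0 < b) (hqp : a * q = b * p)
    [NeZero a] [NeZero b] (c : ZMod a × ZMod b) :
    kk a b c < q ↔ ww a b c < p := by
  set x := c.1.val with hxdef
  set y := c.2.val with hydef
  set D := b * x / a with hD
  set E := (a * y + b - 1) / b with hE
  set k := kk a b c with hk
  set w := ww a b c with hw
  set ρ := b * x % a with hρ
  have hkb : k < b := ZMod.val_lt _
  have hwa : w < a := ZMod.val_lt _
  have hρa : ρ < a := Nat.mod_lt _ ha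
  have hρ' : a * D + ρ = b * x := by rw [hD, hρ, Nat.div_add_mod]
  -- e = b*E - a*y
  have hEfacts : a * y ≤ b * E ∧ b * E < a * y + b := by
    obtain ⟨Q, R, hQR, hR⟩ : ∃ Q R, a * y = b * Q + R ∧ R < b :=
      ⟨a * y / b, a * y % b, (Nat.div_add_mod _ _).symm, Nat.mod_lt _ hb⟩
    have hE1 : E = Q + (R + b - 1) / b := by
      rw [hE, hQR, show b * Q + R + b - 1 = b * Q + (R + b - 1) by omega,
        Nat.mul_add_div hb]
    rcases Nat.eq_zero_or_pos R with hR0 | hR1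
    · have hz : (R + b - 1) / b = 0 := Nat.div_eq_of_lt (by omega)
      have hbE : b * E = b * Q := by simp [hE1, hz]
      omega
    · have hz : (R + b - 1) / b = 1 := by
        apply Nat.div_eq_of_lt_le
        · omega
        · omega
      have hbE : b * E = b * Q + b := by rw [hE1, hz, Nat.mul_add, Nat.mul_one]
      omega
  set e := b * E - a * y with he
  have he' : a * y + e = b * E := by omega
  have heb : e < b := by omega
  -- congruence for k
  have hkc : ((k : ℕ) : ZMod b) = ((D : ℕ) : ZMod b) - c.2 := by
    rw [hk]; unfold kk
    rw [ZMod.natCast_val, ZMod.cast_id]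
  have hyc : ((y : ℕ) : ZMod b) = c.2 := by
    rw [hydef, ZMod.natCast_val, ZMod.cast_id]
  have hmod1 : (k + y) ≡ D [MOD b] := by
    have : ((k + y : ℕ) : ZMod b) = ((D : ℕ) : ZMod b) := by
      push_cast
      rw [hkc, hyc]; ring
    exact (ZMod.natCast_eq_natCast_iff _ _ _).mp this
  obtain ⟨t, ht⟩ : ∃ t : ℤ, (D : ℤ) - (k + y) = b * t := (Nat.modEq_iff_dvd.mp hmod1)
  -- congruence for w
  have hwc : ((w : ℕ) : ZMod a) = c.1 - ((E : ℕ) : ZMod a) := by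
    rw [hw]; unfold ww
    rw [ZMod.natCast_val, ZMod.cast_id]
  have hxc : ((x : ℕ) : ZMod a) = c.1 := by
    rw [hxdef, ZMod.natCast_val, ZMod.cast_id]
  have hmod2 : (w + E) ≡ x [MOD a] := by
    have : ((w + E : ℕ) : ZMod a) = ((x : ℕ) : ZMod a) := by
      push_cast
      rw [hwc, hxc]; ring
    exact (ZMod.natCast_eq_natCast_iff _ _ _).mp this
  obtain ⟨s, hs⟩ : ∃ s : ℤ, (x : ℤ) - (w + E) = a * s := (Nat.modEq_iff_dvd.mp hmod2)
  -- key identity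
  have hρ'' : (a : ℤ) * D + ρ = b * x := by exact_mod_cast hρ'
  have he'' : (a : ℤ) * y + e = b * E := by exact_mod_cast he'
  have hexp : (a : ℤ) * k + ρ - (b * w + e) = a * b * (s - t) := by
    linear_combination (-(a : ℤ)) * ht + (b : ℤ) * hs + hρ'' - he''
  have hst : s = t := by
    have hb1 : (0 : ℤ) < a * b := by positivity
    have hub1N : a * k + ρ < a * b := by
      calc a * k + ρ < a * k + a := by omega
        _ = a * (k + 1) := by ring
        _ ≤ a * b := Nat.mul_le_mul_left a hkb
    have hub2N : b * w + e < b * a := by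
      calc b * w + e < b * w + b := by omega
        _ = b * (w + 1) := by ring
        _ ≤ b * a := Nat.mul_le_mul_left b hwa
    have hub1 : (a : ℤ) * k + ρ < a * b := by exact_mod_cast hub1N
    have hub2 : (b : ℤ) * w + e < a * b := by
      have : (b : ℤ) * w + e < b * a := by exact_mod_cast hub2N
      linarith [this, mul_comm (a : ℤ) b]
    have hlow1 : (0 : ℤ) ≤ (a : ℤ) * k + ρ := by positivity
    have hlow2 : (0 : ℤ) ≤ (b : ℤ) * w + e := by positivity
    rcases lt_trichotomy (s - t) 0 with hc | hc | hc
    · exfalso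
      have h4 : (s - t : ℤ) ≤ -1 := by omega
      have h3 : (a : ℤ) * b * (s - t) ≤ a * b * (-1) := mul_le_mul_of_nonneg_left h4 hb1.le
      linarith [hexp, hlow1, hub2]
    · omega
    · exfalso
      have h4 : (1 : ℤ) ≤ s - t := by omega
      have h3 : (a : ℤ) * b * 1 ≤ a * b * (s - t) := mul_le_mul_of_nonneg_left h4 hb1.le
      linarith [hexp, hub1, hlow2]
  have keyZ : (a : ℤ) * k + ρ = b * w + e := by
    rw [hst] at hexp
    have hz0 : (a : ℤ) * b * (t - t) = 0 := by ring
    linarith [hexp, hz0]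
  have key : a * k + ρ = b * w + e := by exact_mod_cast keyZ
  constructor
  · intro hkq
    have h1 : a * (k + 1) ≤ a * q := Nat.mul_le_mul_left a hkq
    have h2 : b * w < b * p := by
      have : a * k + ρ < a * q := by linarith [Nat.mul_succ a k]
      omega
    exact Nat.lt_of_mul_lt_mul_left h2
  · intro hwp
    have h1 : b * (w + 1) ≤ b * p := Nat.mul_le_mul_left b hwp
    have h2 : a * k < a * q := by
      have : b * w + e < b * p := by linarith [Nat.mul_succ b w]
      omega
    exact Nat.lt_of_mul_lt_mul_left h2

def vsN (a b m v x : ℕ) : ℕ := b * x / a + 1 + (b - m * v)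

def VS (a b m v : ℕ) (i : ZMod a) : ZMod b := ((vsN a b m v i.val : ℕ) : ZMod b)

def hsN (a b n h y : ℕ) : ℕ := (a * y + b - 1) / b + (a - n * h)

def HS (a b n h : ℕ) (j : ZMod b) : ZMod a := ((hsN a b n h j.val : ℕ) : ZMod a)

theorem kk_vert (a b m v : ℕ) [NeZero a] [NeZero b] (hmv : m * v < b)
    (i : ZMod a) (u : ℕ) (hu : u < m * v) :
    kk a b (i, VS a b m v i + (u : ZMod b)) = m * v - 1 - u := by
  have h1 : (((b * i.val / a : ℕ) : ZMod b)) - (VS a b m v i + (u : ZMod b))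
      = ((m * v - 1 - u : ℕ) : ZMod b) := by
    unfold VS vsN
    push_cast [Nat.cast_sub hmv.le, Nat.cast_sub (show 1 ≤ m * v by omega),
      Nat.cast_sub (show u ≤ m * v - 1 by omega), ZMod.natCast_self]
    ring
  show (((b * i.val / a : ℕ) : ZMod b) - (VS a b m v i + (u : ZMod b))).val = m * v - 1 - u
  rw [h1, ZMod.val_cast_of_lt (by omega : m * v - 1 - u < b)]

theorem vert_repr (a b m v : ℕ) [NeZero a] [NeZero b] (hmv : m * v < b)
    (c : ZMod a × ZMod b) (hkq : kk a b c < m * v) :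
    c.2 = VS a b m v c.1 + ((m * v - 1 - kk a b c : ℕ) : ZMod b) := by
  have h0 : ((kk a b c : ℕ) : ZMod b) = (((b * c.1.val / a : ℕ) : ZMod b)) - c.2 := by
    unfold kk
    rw [ZMod.natCast_val, ZMod.cast_id]
  have h2 : c.2 = (((b * c.1.val / a : ℕ) : ZMod b)) - ((kk a b c : ℕ) : ZMod b) := by
    rw [h0]; ring
  rw [h2]
  unfold VS vsN
  push_cast [Nat.cast_sub hmv.le, Nat.cast_sub (show 1 ≤ m * v by omega),
    Nat.cast_sub (show kk a b c ≤ m * v - 1 by omega), ZMod.natCast_self]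
  ring

theorem ww_horiz (a b n h : ℕ) [NeZero a] [NeZero b] (hnh : n * h < a)
    (j : ZMod b) (u : ℕ) (hu : u < n * h) :
    ww a b (HS a b n h j + (u : ZMod a), j) = (a - n * h) + u := by
  have h1 : (HS a b n h j + (u : ZMod a)) - (((a * j.val + b - 1) / b : ℕ) : ZMod a)
      = (((a - n * h) + u : ℕ) : ZMod a) := by
    unfold HS hsN
    push_cast
    ring
  show ((HS a b n h j + (u : ZMod a)) - (((a * j.val + b - 1) / b : ℕ) : ZMod a)).val
      = (a - n * h) + u
  rw [h1, ZMod.val_cast_of_lt (by omega : (a - n * h) + u < a)]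

theorem horiz_repr (a b n h : ℕ) [NeZero a] [NeZero b] (hnh : n * h < a)
    (c : ZMod a × ZMod b) (hwp : a - n * h ≤ ww a b c) :
    c.1 = HS a b n h c.2 + ((ww a b c - (a - n * h) : ℕ) : ZMod a) := by
  have h0 : ((ww a b c : ℕ) : ZMod a) = c.1 - (((a * c.2.val + b - 1) / b : ℕ) : ZMod a) := by
    unfold ww
    rw [ZMod.natCast_val, ZMod.cast_id]
  have h2 : c.1 = (((a * c.2.val + b - 1) / b : ℕ) : ZMod a) + ((ww a b c : ℕ) : ZMod a) := by
    rw [h0]; ring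
  rw [h2]
  unfold HS hsN
  rw [← Nat.cast_add, ← Nat.cast_add,
    show (a * c.2.val + b - 1) / b + (a - n * h) + (ww a b c - (a - n * h))
      = (a * c.2.val + b - 1) / b + ww a b c by omega]

def cellBar (a b h v m n : ℕ) (c : ZMod a × ZMod b) : Bool × ZMod a × ZMod b :=
  if kk a b c < m * v then
    (true, c.1, VS a b m v c.1 + (((m * v - 1 - kk a b c) / v * v : ℕ) : ZMod b))
  else
    (false, HS a b n h c.2 + (((ww a b c - (a - n * h)) / h * h : ℕ) : ZMod a), c.2)

def Tv (a b m v : ℕ) [NeZero a] [NeZero b] : Finset (Bool × ZMod a × ZMod b) :=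
  (Finset.univ ×ˢ Finset.range m).image
    (fun p : ZMod a × ℕ => (true, p.1, VS a b m v p.1 + ((p.2 * v : ℕ) : ZMod b)))

def Th (a b n h : ℕ) [NeZero a] [NeZero b] : Finset (Bool × ZMod a × ZMod b) :=
  (Finset.univ ×ˢ Finset.range n).image
    (fun p : ZMod b × ℕ => (false, HS a b n h p.1 + ((p.2 * h : ℕ) : ZMod a), p.1))

def TT (a b h v m n : ℕ) [NeZero a] [NeZero b] : Finset (Bool × ZMod a × ZMod b) := Tv a b m v ∪ Th a b n h

end Stmt2Aux

lemma fwd (a b h v m n : ℕ) (ha : 1 ≤ a) (hb : 1 ≤ b)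
    (T : Finset (TorusBar a b)) (hT : IsTorusTiling h v T)
    (hV : ∀ i : ZMod a, torusVertCount T i = m)
    (hH : ∀ j : ZMod b, torusHorizCount T j = n) :
    a * b = a * m * v + b * n * h := by
  haveI : NeZero a := ⟨by omega⟩
  haveI : NeZero b := ⟨by omega⟩
  obtain ⟨hcard, huniq⟩ := hT
  -- univ is biUnion of cells
  have hcover : (Finset.univ : Finset (ZMod a × ZMod b)) = T.biUnion (torusBarCells h v) := by
    ext c
    simp only [Finset.mem_univ, Finset.mem_biUnion, true_iff]
    obtain ⟨t, ht, -⟩ := huniq c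
    exact ⟨t, ht.1, ht.2⟩
  have hdisj : ∀ x ∈ T, ∀ y ∈ T, x ≠ y → Disjoint (torusBarCells h v x) (torusBarCells h v y) := by
    intro x hx y hy hxy
    rw [Finset.disjoint_left]
    intro c hcx hcy
    obtain ⟨t, -, htu⟩ := huniq c
    exact hxy ((htu x ⟨hx, hcx⟩).trans (htu y ⟨hy, hcy⟩).symm)
  have htotal : a * b = ∑ t ∈ T, (torusBarCells h v t).card := by
    have h1 : (Finset.univ : Finset (ZMod a × ZMod b)).card = a * b := by
      simp [Fintype.card_prod, ZMod.card]
    rw [← h1, hcover, Finset.card_biUnion hdisj]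
  have hTv' : (Finset.filter (fun t => ¬ t.1 = true) T).card = (Finset.filter (fun t => t.1 = false) T).card := by
    congr 1
    ext t
    simp [Bool.not_eq_true]
  have hsplit : ∑ t ∈ T, (torusBarCells h v t).card
      = (T.filter (fun t => t.1 = true)).card * v + (T.filter (fun t => t.1 = false)).card * h := by
    rw [← Finset.sum_filter_add_sum_filter_not T (fun t => t.1 = true)]
    congr 1
    · have h2 : ∀ t ∈ T.filter (fun t => t.1 = true), (torusBarCells h v t).card = v := by
        intro t ht
        rw [Finset.mem_filter] at ht
        rw [hcard t ht.1, if_pos ht.2]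
      rw [Finset.sum_congr rfl h2, Finset.sum_const, smul_eq_mul]
    · have h2 : ∀ t ∈ T.filter (fun t => ¬ t.1 = true), (torusBarCells h v t).card = h := by
        intro t ht
        rw [Finset.mem_filter] at ht
        have hf : t.1 = false := by simpa using ht.2
        rw [hcard t ht.1, if_neg (by simp [hf])]
      rw [Finset.sum_congr rfl h2, Finset.sum_const, smul_eq_mul, hTv']
  have hTv : (T.filter (fun t => t.1 = true)).card = a * m := by
    rw [Finset.card_eq_sum_card_fiberwise (f := fun t => t.2.1) (t := Finset.univ) (fun x _ => Finset.mem_univ _)]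
    have : ∀ i : ZMod a, ((T.filter (fun t => t.1 = true)).filter (fun t => t.2.1 = i)).card = m := by
      intro i
      rw [Finset.filter_filter]
      exact hV i
    rw [Finset.sum_congr rfl (fun i _ => this i), Finset.sum_const, smul_eq_mul]
    simp [ZMod.card]
  have hTh : (T.filter (fun t => t.1 = false)).card = b * n := by
    rw [Finset.card_eq_sum_card_fiberwise (f := fun t => t.2.2) (t := Finset.univ) (fun x _ => Finset.mem_univ _)]
    have : ∀ j : ZMod b, ((T.filter (fun t => t.1 = false)).filter (fun t => t.2.2 = j)).card = n := by
      intro j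
      rw [Finset.filter_filter]
      exact hH j
    rw [Finset.sum_congr rfl (fun j _ => this j), Finset.sum_const, smul_eq_mul]
    simp [ZMod.card]
  rw [htotal, hsplit, hTv, hTh]


section Main
open Stmt2Aux

variable {a b h v m n : ℕ}


lemma cells_vert {a b : ℕ} (h v : ℕ) (i : ZMod a) (A : ZMod b) :
    torusBarCells h v (true, i, A)
      = (Finset.range v).image (fun s : ℕ => (i, A + (s : ZMod b))) := rfl

lemma cells_horiz {a b : ℕ} (h v : ℕ) (i : ZMod a) (A : ZMod b) :
    torusBarCells h v (false, i, A)
      = (Finset.range h).image (fun s : ℕ => (i + (s : ZMod a), A)) := rfl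

lemma card_cells_vert {a b : ℕ} [NeZero b] (h v : ℕ) (hvb : v ≤ b) (i : ZMod a) (A : ZMod b) :
    (torusBarCells h v (true, i, A)).card = v := by
  rw [cells_vert, Finset.card_image_of_injOn, Finset.card_range]
  intro s1 h1 s2 h2 he
  simp only [Finset.coe_range, Set.mem_Iio] at h1 h2
  have h3 : (s1 : ZMod b) = s2 := by
    have := congrArg Prod.snd he
    simpa using this
  have h4 := congrArg ZMod.val h3
  rwa [ZMod.val_cast_of_lt (lt_of_lt_of_le h1 hvb),
    ZMod.val_cast_of_lt (lt_of_lt_of_le h2 hvb)] at h4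

lemma card_cells_horiz {a b : ℕ} [NeZero a] (h v : ℕ) (hha : h ≤ a) (i : ZMod a) (A : ZMod b) :
    (torusBarCells h v (false, i, A)).card = h := by
  rw [cells_horiz, Finset.card_image_of_injOn, Finset.card_range]
  intro s1 h1 s2 h2 he
  simp only [Finset.coe_range, Set.mem_Iio] at h1 h2
  have h3 : (s1 : ZMod a) = s2 := by
    have := congrArg Prod.fst he
    simpa using this
  have h4 := congrArg ZMod.val h3
  rwa [ZMod.val_cast_of_lt (lt_of_lt_of_le h1 hha),
    ZMod.val_cast_of_lt (lt_of_lt_of_le h2 hha)] at h4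


lemma cellBar_vert (a b h v m n : ℕ) [NeZero a] [NeZero b]
    (hv : 1 ≤ v) (hmv : m * v < b) (i : ZMod a) (u : ℕ) (hult : u < m * v) :
    cellBar a b h v m n (i, VS a b m v i + ((u : ℕ) : ZMod b))
      = (true, i, VS a b m v i + ((u / v * v : ℕ) : ZMod b)) := by
  have hkk := kk_vert a b m v hmv i u hult
  have h1 : m * v - 1 - (m * v - 1 - u) = u := by omega
  simp only [cellBar, hkk]
  rw [if_pos (show m * v - 1 - u < m * v by omega), h1]

lemma cellBar_horiz (a b h v m n : ℕ) [NeZero a] [NeZero b]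
    (hh : 1 ≤ h) (hmv : m * v < b) (hnh : n * h < a)
    (hC : a * (m * v) = b * (a - n * h)) (j : ZMod b) (u : ℕ) (hult : u < n * h) :
    cellBar a b h v m n (HS a b n h j + ((u : ℕ) : ZMod a), j)
      = (false, HS a b n h j + ((u / h * h : ℕ) : ZMod a), j) := by
  have hww := ww_horiz a b n h hnh j u hult
  have hnk : ¬ kk a b (HS a b n h j + ((u : ℕ) : ZMod a), j) < m * v := by
    intro hlt
    have := (dich a b (m * v) (a - n * h) (by omega) (by omega) hC _).mp hlt
    omega
  have h1 : (a - n * h) + u - (a - n * h) = u := by omega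
  simp only [cellBar, hww]
  rw [if_neg hnk, h1]

lemma memTT (a b h v m n : ℕ) [NeZero a] [NeZero b]
    (hh : 1 ≤ h) (hv : 1 ≤ v) (hm : 1 ≤ m) (hn : 1 ≤ n)
    (hmv : m * v < b) (hnh : n * h < a) (hC : a * (m * v) = b * (a - n * h))
    (c : ZMod a × ZMod b) :
    cellBar a b h v m n c ∈ TT a b h v m n ∧
      c ∈ torusBarCells h v (cellBar a b h v m n c) := by
  have hmv1 : 1 ≤ m * v := Nat.mul_le_mul hm hv
  have hnh1 : 1 ≤ n * h := Nat.mul_le_mul hn hh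
  by_cases hc : kk a b c < m * v
  · set u := m * v - 1 - kk a b c with hu
    have hult : u < m * v := by omega
    have h2 : c.2 = VS a b m v c.1 + ((u : ℕ) : ZMod b) := vert_repr a b m v hmv c hc
    have hceq : c = (c.1, VS a b m v c.1 + ((u : ℕ) : ZMod b)) := by rw [← h2]
    have hcb := cellBar_vert a b h v m n hv hmv c.1 u hult
    rw [← hceq] at hcb
    constructor
    · rw [hcb]
      apply Finset.mem_union_left
      apply Finset.mem_image.mpr
      refine ⟨(c.1, u / v), ?_, rfl⟩
      exact Finset.mem_product.mpr ⟨Finset.mem_univ _,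
        Finset.mem_range.mpr ((Nat.div_lt_iff_lt_mul hv).mpr hult)⟩
    · rw [hcb, cells_vert]
      apply Finset.mem_image.mpr
      refine ⟨u % v, Finset.mem_range.mpr (Nat.mod_lt _ hv), ?_⟩
      have h3 : VS a b m v c.1 + ((u / v * v : ℕ) : ZMod b) + ((u % v : ℕ) : ZMod b)
          = VS a b m v c.1 + ((u : ℕ) : ZMod b) := by
        have h4 : u / v * v + u % v = u := by
          rw [Nat.mul_comm]; exact Nat.div_add_mod u v
        rw [add_assoc, ← Nat.cast_add, h4]
      rw [h3, ← h2]
  · have hw : a - n * h ≤ ww a b c := by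
      by_contra hlt
      push_neg at hlt
      exact hc ((dich a b (m * v) (a - n * h) (by omega) (by omega) hC c).mpr hlt)
    set u := ww a b c - (a - n * h) with hu
    have hwa : ww a b c < a := ZMod.val_lt _
    have hult : u < n * h := by omega
    have h2 : c.1 = HS a b n h c.2 + ((u : ℕ) : ZMod a) := horiz_repr a b n h hnh c hw
    have hceq : c = (HS a b n h c.2 + ((u : ℕ) : ZMod a), c.2) := by rw [← h2]
    have hcb := cellBar_horiz a b h v m n hh hmv hnh hC c.2 u hult
    rw [← hceq] at hcb
    constructor
    · rw [hcb]
      apply Finset.mem_union_right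
      apply Finset.mem_image.mpr
      refine ⟨(c.2, u / h), ?_, rfl⟩
      exact Finset.mem_product.mpr ⟨Finset.mem_univ _,
        Finset.mem_range.mpr ((Nat.div_lt_iff_lt_mul hh).mpr hult)⟩
    · rw [hcb, cells_horiz]
      apply Finset.mem_image.mpr
      refine ⟨u % h, Finset.mem_range.mpr (Nat.mod_lt _ hh), ?_⟩
      have h3 : HS a b n h c.2 + ((u / h * h : ℕ) : ZMod a) + ((u % h : ℕ) : ZMod a)
          = HS a b n h c.2 + ((u : ℕ) : ZMod a) := by
        have h4 : u / h * h + u % h = u := by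
          rw [Nat.mul_comm]; exact Nat.div_add_mod u h
        rw [add_assoc, ← Nat.cast_add, h4]
      rw [h3, ← h2]

lemma cellBar_eq (a b h v m n : ℕ) [NeZero a] [NeZero b]
    (hh : 1 ≤ h) (hv : 1 ≤ v) (hm : 1 ≤ m) (hn : 1 ≤ n)
    (hmv : m * v < b) (hnh : n * h < a) (hC : a * (m * v) = b * (a - n * h))
    (t : Bool × ZMod a × ZMod b) (ht : t ∈ TT a b h v m n)
    (c : ZMod a × ZMod b) (hc : c ∈ torusBarCells h v t) :
    cellBar a b h v m n c = t := by
  rcases Finset.mem_union.mp ht with ht1 | ht1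
  · obtain ⟨⟨i, l⟩, hp, rfl⟩ := Finset.mem_image.mp ht1
    have hl : l < m := Finset.mem_range.mp (Finset.mem_product.mp hp).2
    rw [cells_vert] at hc
    obtain ⟨s, hs, rfl⟩ := Finset.mem_image.mp hc
    rw [Finset.mem_range] at hs
    have hult : l * v + s < m * v := by
      have h5 : l * v + v ≤ m * v := by
        rw [← Nat.succ_mul]
        exact Nat.mul_le_mul_right v hl
      omega
    have hcell2 : ((i : ZMod a), VS a b m v i + ((l * v : ℕ) : ZMod b) + ((s : ℕ) : ZMod b))
        = (i, VS a b m v i + ((l * v + s : ℕ) : ZMod b)) := by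
      rw [Nat.cast_add, add_assoc]
    have hdiv : (l * v + s) / v = l := by
      rw [Nat.add_comm, Nat.add_mul_div_right _ _ hv, Nat.div_eq_of_lt hs, Nat.zero_add]
    rw [hcell2, cellBar_vert a b h v m n hv hmv i (l * v + s) hult, hdiv]
  · obtain ⟨⟨j, l⟩, hp, rfl⟩ := Finset.mem_image.mp ht1
    have hl : l < n := Finset.mem_range.mp (Finset.mem_product.mp hp).2
    rw [cells_horiz] at hc
    obtain ⟨s, hs, rfl⟩ := Finset.mem_image.mp hc
    rw [Finset.mem_range] at hs
    have hult : l * h + s < n * h := by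
      have h5 : l * h + h ≤ n * h := by
        rw [← Nat.succ_mul]
        exact Nat.mul_le_mul_right h hl
      omega
    have hcell2 : (HS a b n h j + ((l * h : ℕ) : ZMod a) + ((s : ℕ) : ZMod a), (j : ZMod b))
        = (HS a b n h j + ((l * h + s : ℕ) : ZMod a), j) := by
      rw [Nat.cast_add, add_assoc]
    have hdiv : (l * h + s) / h = l := by
      rw [Nat.add_comm, Nat.add_mul_div_right _ _ hh, Nat.div_eq_of_lt hs, Nat.zero_add]
    rw [hcell2, cellBar_horiz a b h v m n hh hmv hnh hC j (l * h + s) hult, hdiv]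

lemma cardTT (a b h v m n : ℕ) [NeZero a] [NeZero b]
    (hh : 1 ≤ h) (hv : 1 ≤ v) (hm : 1 ≤ m) (hn : 1 ≤ n)
    (hmv : m * v < b) (hnh : n * h < a)
    (t : Bool × ZMod a × ZMod b) (ht : t ∈ TT a b h v m n) :
    (torusBarCells h v t).card = if t.1 then v else h := by
  have hvb : v ≤ b := le_trans (Nat.le_mul_of_pos_left v hm) hmv.le
  have hha : h ≤ a := le_trans (Nat.le_mul_of_pos_left h hn) hnh.le
  rcases Finset.mem_union.mp ht with ht1 | ht1
  · obtain ⟨p, hp, rfl⟩ := Finset.mem_image.mp ht1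
    rw [card_cells_vert h v hvb]
    rfl
  · obtain ⟨p, hp, rfl⟩ := Finset.mem_image.mp ht1
    rw [card_cells_horiz h v hha]
    rfl

lemma vertCountTT (a b h v m n : ℕ) [NeZero a] [NeZero b]
    (hh : 1 ≤ h) (hv : 1 ≤ v) (hm : 1 ≤ m) (hn : 1 ≤ n)
    (hmv : m * v < b) (hnh : n * h < a) (i : ZMod a) :
    torusVertCount (TT a b h v m n) i = m := by
  rw [torusVertCount]
  have hset : (TT a b h v m n).filter (fun t => t.1 = true ∧ t.2.1 = i)
      = (Finset.range m).image (fun l => (true, i, VS a b m v i + ((l * v : ℕ) : ZMod b))) := by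
    ext t
    simp only [Finset.mem_filter, Finset.mem_image, Finset.mem_range, TT, Finset.mem_union,
      Tv, Th, Finset.mem_image, Finset.mem_product, Finset.mem_univ, true_and]
    constructor
    · rintro ⟨ht1 | ht1, ht2, ht3⟩
      · obtain ⟨⟨i', l⟩, hl, rfl⟩ := ht1
        refine ⟨l, hl, ?_⟩
        simp only at ht3 ⊢
        rw [ht3]
      · obtain ⟨p, hp, rfl⟩ := ht1
        simp at ht2
    · rintro ⟨l, hl, rfl⟩
      exact ⟨Or.inl ⟨(i, l), hl, rfl⟩, rfl, rfl⟩
  rw [hset, Finset.card_image_of_injOn, Finset.card_range]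
  intro l1 h1 l2 h2 he
  simp only [Finset.coe_range, Set.mem_Iio] at h1 h2
  have h3 : ((l1 * v : ℕ) : ZMod b) = ((l2 * v : ℕ) : ZMod b) := by
    have := congrArg (fun t : Bool × ZMod a × ZMod b => t.2.2) he
    simpa using this
  have h4 := congrArg ZMod.val h3
  have hb1 : l1 * v < b := lt_of_lt_of_le (Nat.mul_lt_mul_of_lt_of_le h1 le_rfl hv) hmv.le
  have hb2 : l2 * v < b := lt_of_lt_of_le (Nat.mul_lt_mul_of_lt_of_le h2 le_rfl hv) hmv.le
  rw [ZMod.val_cast_of_lt hb1, ZMod.val_cast_of_lt hb2] at h4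
  exact Nat.eq_of_mul_eq_mul_right hv h4

lemma horizCountTT (a b h v m n : ℕ) [NeZero a] [NeZero b]
    (hh : 1 ≤ h) (hv : 1 ≤ v) (hm : 1 ≤ m) (hn : 1 ≤ n)
    (hmv : m * v < b) (hnh : n * h < a) (j : ZMod b) :
    torusHorizCount (TT a b h v m n) j = n := by
  rw [torusHorizCount]
  have hset : (TT a b h v m n).filter (fun t => t.1 = false ∧ t.2.2 = j)
      = (Finset.range n).image (fun l => (false, HS a b n h j + ((l * h : ℕ) : ZMod a), j)) := by
    ext t
    simp only [Finset.mem_filter, Finset.mem_image, Finset.mem_range, TT, Finset.mem_union,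
      Tv, Th, Finset.mem_image, Finset.mem_product, Finset.mem_univ, true_and]
    constructor
    · rintro ⟨ht1 | ht1, ht2, ht3⟩
      · obtain ⟨p, hp, rfl⟩ := ht1
        simp at ht2
      · obtain ⟨⟨j', l⟩, hl, rfl⟩ := ht1
        refine ⟨l, hl, ?_⟩
        simp only at ht3 ⊢
        rw [ht3]
    · rintro ⟨l, hl, rfl⟩
      exact ⟨Or.inr ⟨(j, l), hl, rfl⟩, rfl, rfl⟩
  rw [hset, Finset.card_image_of_injOn, Finset.card_range]
  intro l1 h1 l2 h2 he
  simp only [Finset.coe_range, Set.mem_Iio] at h1 h2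
  have h3 : ((l1 * h : ℕ) : ZMod a) = ((l2 * h : ℕ) : ZMod a) := by
    have := congrArg (fun t : Bool × ZMod a × ZMod b => t.2.1) he
    simpa using this
  have h4 := congrArg ZMod.val h3
  have hb1 : l1 * h < a := lt_of_lt_of_le (Nat.mul_lt_mul_of_lt_of_le h1 le_rfl hh) hnh.le
  have hb2 : l2 * h < a := lt_of_lt_of_le (Nat.mul_lt_mul_of_lt_of_le h2 le_rfl hh) hnh.le
  rw [ZMod.val_cast_of_lt hb1, ZMod.val_cast_of_lt hb2] at h4
  exact Nat.eq_of_mul_eq_mul_right hh h4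

end Main

/-- The torus `ℤ_a × ℤ_b` admits a tiling by horizontal bars of length `h` and
vertical bars of length `v` with exactly `m` vertical bars in every column and
exactly `n` horizontal bars in every row, if and only if `ab = amv + bnh`. -/
theorem stmt_2 (a b h v m n : ℕ) (ha : 1 ≤ a) (hb : 1 ≤ b) (hh : 1 ≤ h)
    (hv : 1 ≤ v) (hm : 1 ≤ m) (hn : 1 ≤ n) :
    (∃ T : Finset (TorusBar a b), IsTorusTiling h v T ∧
      (∀ i : ZMod a, torusVertCount T i = m) ∧
      (∀ j : ZMod b, torusHorizCount T j = n)) ↔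
    a * b = a * m * v + b * n * h := by
  haveI : NeZero a := ⟨by omega⟩
  haveI : NeZero b := ⟨by omega⟩
  constructor
  · rintro ⟨T, hT, hV, hH⟩
    exact fwd a b h v m n ha hb T hT hV hH
  · intro hEq
    have hmv1 : 1 ≤ m * v := Nat.mul_le_mul hm hv
    have hnh1 : 1 ≤ n * h := Nat.mul_le_mul hn hh
    have hmv : m * v < b := by
      have h2 : a * (m * v) < a * b := by
        calc a * (m * v) = a * m * v := by ring
          _ < a * m * v + b * n * h := by
              have : 1 * (1 * 1) ≤ b * (n * h) := Nat.mul_le_mul hb (Nat.mul_le_mul hn hh)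
              have hbnh : b * n * h = b * (n * h) := by ring
              omega
          _ = a * b := hEq.symm
      exact Nat.lt_of_mul_lt_mul_left h2
    have hnh : n * h < a := by
      have h2 : b * (n * h) < b * a := by
        calc b * (n * h) = b * n * h := by ring
          _ < a * m * v + b * n * h := by
              have : 1 * (1 * 1) ≤ a * (m * v) := Nat.mul_le_mul ha (Nat.mul_le_mul hm hv)
              have hamv : a * m * v = a * (m * v) := by ring
              omega
          _ = b * a := by rw [← hEq]; ring
      exact Nat.lt_of_mul_lt_mul_left h2
    have hC : a * (m * v) = b * (a - n * h) := by
      have hle : b * (n * h) ≤ b * a := Nat.mul_le_mul_left b hnh.le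
      have hsum : a * (m * v) + b * (n * h) = b * a := by
        have h1 : a * (m * v) = a * m * v := by ring
        have h2 : b * (n * h) = b * n * h := by ring
        have h3 : b * a = a * b := by ring
        omega
      rw [Nat.mul_sub]
      omega
    refine ⟨Stmt2Aux.TT a b h v m n, ⟨?_, ?_⟩, ?_, ?_⟩
    · exact fun t ht => cardTT a b h v m n hh hv hm hn hmv hnh t ht
    · intro c
      obtain ⟨hmem, hcell⟩ := memTT a b h v m n hh hv hm hn hmv hnh hC c
      exact ⟨Stmt2Aux.cellBar a b h v m n c, ⟨hmem, hcell⟩,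
        fun t' ht' => (cellBar_eq a b h v m n hh hv hm hn hmv hnh hC t' ht'.1 c ht'.2).symm⟩
    · exact fun i => vertCountTT a b h v m n hh hv hm hn hmv hnh i
    · exact fun j => horizCountTT a b h v m n hh hv hm hn hmv hnh j
end

section
/- If for some integers a, b, h, v, m, n ≥ 1 the torus T_{a×b} admits a tiling by horizontal bars of length h and vertical bars of length v with exactly m vertical bars in each column and exactly n horizontal bars in each row, then gcd(a,b) > 1. -/
/-- If for some `a,b,h,v,m,n ≥ 1` the torus `ℤ_a × ℤ_b` admits a tiling by horizontal
bars of length `h` and vertical bars of length `v` with exactly `m` vertical bars in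
every column and exactly `n` horizontal bars in every row, then `gcd(a,b) > 1`. -/
theorem stmt_3 (a b h v m n : ℕ) (ha : 1 ≤ a) (hb : 1 ≤ b) (hh : 1 ≤ h)
    (hv : 1 ≤ v) (hm : 1 ≤ m) (hn : 1 ≤ n)
    (T : Finset (TorusBar a b)) (hT : IsTorusTiling h v T)
    (hcol : ∀ i : ZMod a, torusVertCount T i = m)
    (hrow : ∀ j : ZMod b, torusHorizCount T j = n) :
    1 < Nat.gcd a b := by
  haveI : NeZero a := ⟨by omega⟩
  haveI : NeZero b := ⟨by omega⟩
  obtain ⟨hcard, hcover⟩ := hT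
  -- the bars' cell sets are pairwise disjoint and cover the torus
  have hunion : T.biUnion (torusBarCells h v) = Finset.univ := by
    ext c
    simp only [Finset.mem_biUnion, Finset.mem_univ, iff_true]
    obtain ⟨u, hu, _⟩ := hcover c
    exact ⟨u, hu.1, hu.2⟩
  have hsum : ∑ t ∈ T, (torusBarCells h v t).card = a * b := by
    have := Finset.card_biUnion (s := T) (t := torusBarCells h v) ?_
    · rw [hunion] at this
      rw [← this, Finset.card_univ, Fintype.card_prod, ZMod.card, ZMod.card]
    · intro t1 h1 t2 h2 hne
      refine Finset.disjoint_left.mpr fun c hc1 hc2 => hne ?_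
      obtain ⟨u, _, huniq⟩ := hcover c
      rw [huniq t1 ⟨h1, hc1⟩, huniq t2 ⟨h2, hc2⟩]
  -- total number of vertical bars
  have hvertcard : (T.filter (fun t => t.1 = true)).card = a * m := by
    rw [Finset.card_eq_sum_card_fiberwise
      (f := fun t => t.2.1) (t := (Finset.univ : Finset (ZMod a))) (fun x _ => Finset.mem_univ _)]
    have key : ∀ i : ZMod a,
        ((T.filter (fun t => t.1 = true)).filter (fun t => t.2.1 = i)).card = m := by
      intro i
      rw [Finset.filter_filter]
      exact hcol i
    rw [Finset.sum_congr rfl (fun i _ => key i), Finset.sum_const, Finset.card_univ, ZMod.card,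
      smul_eq_mul]
  -- total number of horizontal bars
  have hhorizcard : (T.filter (fun t => t.1 = false)).card = b * n := by
    rw [Finset.card_eq_sum_card_fiberwise
      (f := fun t => t.2.2) (t := (Finset.univ : Finset (ZMod b))) (fun x _ => Finset.mem_univ _)]
    have key : ∀ j : ZMod b,
        ((T.filter (fun t => t.1 = false)).filter (fun t => t.2.2 = j)).card = n := by
      intro j
      rw [Finset.filter_filter]
      exact hrow j
    rw [Finset.sum_congr rfl (fun j _ => key j), Finset.sum_const, Finset.card_univ, ZMod.card,
      smul_eq_mul]
  -- the counting identity  a*b = v*(a*m) + h*(b*n)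
  have keyeq : a * b = v * (a * m) + h * (b * n) := by
    rw [← hsum, ← hvertcard, ← hhorizcard,
      ← Finset.sum_filter_add_sum_filter_not T (fun t => t.1 = true)]
    congr 1
    · rw [Finset.sum_congr rfl (fun t ht => ?_), Finset.sum_const, smul_eq_mul, mul_comm]
      have h1 := Finset.mem_filter.mp ht
      rw [hcard t h1.1, h1.2, if_pos rfl]
    · have hfe : T.filter (fun t => ¬ t.1 = true) = T.filter (fun t => t.1 = false) := by
        apply Finset.filter_congr
        intro t _
        simp
      rw [hfe, Finset.sum_congr rfl (fun t ht => ?_), Finset.sum_const, smul_eq_mul, mul_comm]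
      have h1 := Finset.mem_filter.mp ht
      rw [hcard t h1.1, h1.2, if_neg (by simp)]
  -- now pure arithmetic: if gcd a b = 1 we get a contradiction
  by_contra hg
  have hcop : Nat.Coprime a b := by
    have h1 : Nat.gcd a b ≠ 0 := Nat.gcd_ne_zero_left (by omega)
    unfold Nat.Coprime
    omega
  have keyeq2 : a * b = a * (v * m) + b * (n * h) := by
    rw [keyeq]; ring
  have hP1 : 1 ≤ v * m := Nat.one_le_iff_ne_zero.mpr (by positivity)
  have hQ1 : 1 ≤ n * h := Nat.one_le_iff_ne_zero.mpr (by positivity)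
  have hmv : v * m ≤ b := by
    refine Nat.le_of_mul_le_mul_left ?_ (show 0 < a by omega)
    omega
  obtain ⟨r, hr⟩ : ∃ r, b = v * m + r := ⟨b - v * m, by omega⟩
  have hbq : a * r = b * (n * h) := by
    have : a * (v * m) + a * r = a * (v * m) + b * (n * h) := by
      rw [← Nat.left_distrib, ← hr]; exact keyeq2
    exact Nat.add_left_cancel this
  have hdvd2 : a ∣ n * h :=
    Nat.Coprime.dvd_of_dvd_mul_left hcop ⟨r, hbq.symm⟩
  have hrb : r < b := by omega
  have hlt : n * h < a := by
    have h5 : b * (n * h) < b * a := by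
      rw [← hbq]
      calc a * r < a * b := by
            exact Nat.mul_lt_mul_of_le_of_lt (le_refl a) hrb (by omega)
        _ = b * a := Nat.mul_comm a b
    exact Nat.lt_of_mul_lt_mul_left h5
  have hge := Nat.le_of_dvd (by omega) hdvd2
  omega
end

section
/- If a torus tiling with uniform projections exists (i.e., ab = amv + bnh with a,b,h,v,m,n ≥ 1), then with c = gcd(a,b), a' = a/c, b' = b/c, p = nh/a', q = mv/b', the torus Z_a × Z_b can be partitioned into p+q rectangles: for each i in {0,...,p+q-1}, a rectangle of width nh and height b' with upper-left corner (a'i, b'i), and a rectangle of width a' and height mv with upper-left corner (a'i, b'(i+1)), where coordinates are taken mod a and mod b respectively. -/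
/-- The rectangle of width `w` and height `l` with upper-left corner `(x,y)` in the
torus `ℤ_a × ℤ_b`: the set `{(x+s, y+t) : 0 ≤ s < w, 0 ≤ t < l}` with coordinates
taken mod `a` and mod `b`. -/
def torusRect {a b : ℕ} (x : ZMod a) (y : ZMod b) (w l : ℕ) : Finset (ZMod a × ZMod b) :=
  ((Finset.range w) ×ˢ (Finset.range l)).image
    (fun (st : ℕ × ℕ) => (x + (st.1 : ZMod a), y + (st.2 : ZMod b)))

lemma modc_iff {c a' : ℕ} (ha' : 0 < a') {u v x0 x1 : ℕ} (hu : u < c) (hx0 : x0 < a')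
    (hx1 : x1 < a') :
    (a' * u + x0) % (c * a') = (a' * v + x1) % (c * a') ↔ u = v % c ∧ x0 = x1 := by
  have hc : 0 < c := lt_of_le_of_lt (Nat.zero_le u) hu
  have hL : (a' * u + x0) % (c * a') = a' * u + x0 := by
    apply Nat.mod_eq_of_lt
    calc a' * u + x0 < a' * u + a' := by omega
      _ = a' * (u + 1) := by ring
      _ ≤ a' * c := Nat.mul_le_mul_left _ (by omega)
      _ = c * a' := by ring
  have hvd := Nat.div_add_mod v c
  have hR : (a' * v + x1) % (c * a') = a' * (v % c) + x1 := by
    have he : a' * v + x1 = a' * (v % c) + x1 + (c * a') * (v / c) := by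
      calc a' * v + x1 = a' * (c * (v / c) + v % c) + x1 := by rw [hvd]
        _ = a' * (v % c) + x1 + (c * a') * (v / c) := by ring
    rw [he, Nat.add_mul_mod_self_left]
    apply Nat.mod_eq_of_lt
    have : v % c < c := Nat.mod_lt _ hc
    calc a' * (v % c) + x1 < a' * (v % c) + a' := by omega
      _ = a' * (v % c + 1) := by ring
      _ ≤ a' * c := Nat.mul_le_mul_left _ (by omega)
      _ = c * a' := by ring
  rw [hL, hR]
  constructor
  · intro hEq
    have h0 : x0 = x1 := by
      have := congrArg (· % a') hEq
      simpa [Nat.mul_add_mod, Nat.mod_eq_of_lt hx0, Nat.mod_eq_of_lt hx1] using this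
    have h1 : a' * u = a' * (v % c) := by omega
    exact ⟨Nat.eq_of_mul_eq_mul_left ha' h1, h0⟩
  · rintro ⟨rfl, rfl⟩; rfl

lemma cast_modc {a c a' : ℕ} (haa : a = c * a') (ha' : 0 < a') {u v x0 x1 : ℕ} (hu : u < c)
    (hx0 : x0 < a') (hx1 : x1 < a') :
    (((a' * u + x0 : ℕ) : ZMod a) = ((a' * v + x1 : ℕ) : ZMod a)) ↔ u = v % c ∧ x0 = x1 := by
  subst haa
  rw [ZMod.natCast_eq_natCast_iff]
  exact modc_iff ha' hu hx0 hx1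

lemma mem_torusRect {a b : ℕ} {x : ZMod a} {y : ZMod b} {w l : ℕ} {z : ZMod a × ZMod b} :
    z ∈ torusRect x y w l ↔
      ∃ s, s < w ∧ ∃ t, t < l ∧ z.1 = x + (s : ZMod a) ∧ z.2 = y + (t : ZMod b) := by
  simp only [torusRect, Finset.mem_image, Finset.mem_product, Finset.mem_range, Prod.ext_iff]
  constructor
  · rintro ⟨⟨s, t⟩, ⟨hs, ht⟩, h1, h2⟩
    exact ⟨s, hs, t, ht, h1.symm, h2.symm⟩
  · rintro ⟨s, hs, t, ht, h1, h2⟩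
    exact ⟨(s, t), ⟨hs, ht⟩, h1.symm, h2.symm⟩

lemma cancel_base {base c j j' : ℕ} (hj : j < c) (hj' : j' < c)
    (h : (base + j) % c = (base + j') % c) : j = j' := by
  have : j % c = j' % c := Nat.ModEq.add_left_cancel' base h
  rwa [Nat.mod_eq_of_lt hj, Nat.mod_eq_of_lt hj'] at this

/-- If `a,b,h,v,m,n ≥ 1` and `ab = amv + bnh` then, with `c = gcd(a,b)`, `a' = a/c`,
`b' = b/c`, `p = nh/a'`, `q = mv/b'`, the torus `ℤ_a × ℤ_b` is partitioned by the
family consisting, for each `i ∈ {0,…,p+q-1}`, of the rectangle of width `nh` and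
height `b'` with upper-left corner `(a'i, b'i)` and the rectangle of width `a'` and
height `mv` with upper-left corner `(a'i, b'(i+1))`: every cell of the torus lies in
exactly one member of the family. -/
theorem stmt_4 (a b h v m n c a' b' p q : ℕ)
    (ha : 1 ≤ a) (hb : 1 ≤ b) (hh : 1 ≤ h) (hv : 1 ≤ v) (hm : 1 ≤ m) (hn : 1 ≤ n)
    (heq : a * b = a * m * v + b * n * h)
    (hc : c = Nat.gcd a b) (ha' : a' = a / c) (hb' : b' = b / c)
    (hp : p = n * h / a') (hq : q = m * v / b') :
    ∀ z : ZMod a × ZMod b, ∃! ib : ℕ × Bool, ib.1 < p + q ∧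
      z ∈ (if ib.2 then
              torusRect ((a' * ib.1 : ℕ) : ZMod a) ((b' * (ib.1 + 1) : ℕ) : ZMod b) a' (m * v)
            else
              torusRect ((a' * ib.1 : ℕ) : ZMod a) ((b' * ib.1 : ℕ) : ZMod b) (n * h) b') := by
  intro z
  have hgpos : 0 < Nat.gcd a b := Nat.gcd_pos_of_pos_left b ha
  have hcpos : 0 < c := hc ▸ hgpos
  have hca : c ∣ a := hc ▸ Nat.gcd_dvd_left a b
  have hcb : c ∣ b := hc ▸ Nat.gcd_dvd_right a b
  have haa : a = c * a' := by rw [ha']; exact (Nat.mul_div_cancel' hca).symm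
  have hbb : b = c * b' := by rw [hb']; exact (Nat.mul_div_cancel' hcb).symm
  have ha'pos : 0 < a' := Nat.pos_of_ne_zero (fun h0 => by rw [h0, Nat.mul_zero] at haa; omega)
  have hb'pos : 0 < b' := Nat.pos_of_ne_zero (fun h0 => by rw [h0, Nat.mul_zero] at hbb; omega)
  have cop : Nat.Coprime a' b' := by
    rw [ha', hb', hc]; exact Nat.coprime_div_gcd_div_gcd hgpos
  have e2 : c * (a' * b') = a' * (m * v) + b' * (n * h) := by
    have e1 : c * (c * (a' * b')) = c * (a' * (m * v) + b' * (n * h)) := by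
      calc c * (c * (a' * b')) = (c * a') * (c * b') := by ring
        _ = (c * a') * m * v + (c * b') * n * h := by rw [← haa, ← hbb]; exact heq
        _ = c * (a' * (m * v) + b' * (n * h)) := by ring
    exact Nat.eq_of_mul_eq_mul_left hcpos e1
  have hdvd_a : a' ∣ n * h := by
    have hd1 : a' ∣ b' * (n * h) := by
      have hsub : b' * (n * h) = c * (a' * b') - a' * (m * v) := by omega
      rw [hsub]
      exact Nat.dvd_sub ⟨c * b', by ring⟩ (dvd_mul_right a' (m * v))
    exact cop.dvd_of_dvd_mul_left hd1
  have hdvd_b : b' ∣ m * v := by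
    have hd1 : b' ∣ a' * (m * v) := by
      have hsub : a' * (m * v) = c * (a' * b') - b' * (n * h) := by omega
      rw [hsub]
      exact Nat.dvd_sub ⟨c * a', by ring⟩ (dvd_mul_right b' (n * h))
    exact cop.symm.dvd_of_dvd_mul_left hd1
  have hpa : a' * p = n * h := by rw [hp]; exact Nat.mul_div_cancel' hdvd_a
  have hqb : b' * q = m * v := by rw [hq]; exact Nat.mul_div_cancel' hdvd_b
  have hpq : p + q = c := by
    have e3 : c * (a' * b') = (p + q) * (a' * b') := by
      calc c * (a' * b') = a' * (m * v) + b' * (n * h) := e2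
        _ = a' * (b' * q) + b' * (a' * p) := by rw [hqb, hpa]
        _ = (p + q) * (a' * b') := by ring
    have := Nat.eq_of_mul_eq_mul_right (Nat.mul_pos ha'pos hb'pos) e3
    omega
  have hppos : 0 < p := by
    have hnh : 0 < n * h := Nat.mul_pos (by omega) (by omega)
    rcases Nat.eq_zero_or_pos p with h0 | h0
    · rw [h0, Nat.mul_zero] at hpa; omega
    · exact h0
  have hqpos : 0 < q := by
    have hmv : 0 < m * v := Nat.mul_pos (by omega) (by omega)
    rcases Nat.eq_zero_or_pos q with h0 | h0
    · rw [h0, Nat.mul_zero] at hqb; omega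
    · exact h0
  haveI : NeZero a := ⟨by omega⟩
  haveI : NeZero b := ⟨by omega⟩
  set X := z.1.val with hXdef
  set Y := z.2.val with hYdef
  have hXlt : X < a := ZMod.val_lt z.1
  have hYlt : Y < b := ZMod.val_lt z.2
  set u := X / a' with hudef
  set x0 := X % a' with hx0def
  set w := Y / b' with hwdef
  set y0 := Y % b' with hy0def
  have hXdec : a' * u + x0 = X := Nat.div_add_mod X a'
  have hYdec : b' * w + y0 = Y := Nat.div_add_mod Y b'
  have hu : u < c := Nat.div_lt_of_lt_mul (by rw [Nat.mul_comm]; omega)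
  have hw : w < c := Nat.div_lt_of_lt_mul (by rw [Nat.mul_comm]; omega)
  have hx0 : x0 < a' := Nat.mod_lt _ ha'pos
  have hy0 : y0 < b' := Nat.mod_lt _ hb'pos
  obtain ⟨d, Q, hQ, hdlt⟩ : ∃ d Q, u + c = w + (c * Q + d) ∧ d < c := by
    refine ⟨(u + c - w) % c, (u + c - w) / c, ?_, Nat.mod_lt _ hcpos⟩
    rw [Nat.div_add_mod]
    exact (Nat.add_sub_cancel' (le_trans (Nat.le_of_lt hw) (Nat.le_add_left c u))).symm
  have h1 : (w + d) % c = u := by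
    have he : u + c = w + d + c * Q := by omega
    have h2 : (u + c) % c = (w + d) % c := by rw [he, Nat.add_mul_mod_self_left]
    rw [← h2, Nat.add_mod_right]
    exact Nat.mod_eq_of_lt hu
  have h2 : (u + 1 + (c - 1 - d)) % c = w := by
    have he : u + 1 + (c - 1 - d) = w + c * Q := by omega
    rw [he, Nat.add_mul_mod_self_left]
    exact Nat.mod_eq_of_lt hw
  have hXz : ((a' * u + x0 : ℕ) : ZMod a) = z.1 := by
    rw [hXdec]; exact ZMod.natCast_rightInverse z.1
  have hYz : ((b' * w + y0 : ℕ) : ZMod b) = z.2 := by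
    rw [hYdec]; exact ZMod.natCast_rightInverse z.2
  have extract_false : ∀ i : ℕ, i < c →
      z ∈ torusRect ((a' * i : ℕ) : ZMod a) ((b' * i : ℕ) : ZMod b) (n * h) b' →
      i = w ∧ ∃ j, j < p ∧ (w + j) % c = u := by
    intro i hi hmem
    rw [mem_torusRect] at hmem
    obtain ⟨s, hs, t, ht, hz1, hz2⟩ := hmem
    have hy : ((b' * w + y0 : ℕ) : ZMod b) = ((b' * i + t : ℕ) : ZMod b) := by
      rw [hYz, hz2]; push_cast; ring
    have hy' := (cast_modc hbb hb'pos hw hy0 ht).mp hy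
    have hiw : i = w := by rw [hy'.1, Nat.mod_eq_of_lt hi]
    have hsdec := Nat.div_add_mod s a'
    have hxe : a' * i + s = a' * (i + s / a') + s % a' := by
      rw [Nat.mul_add, add_assoc, hsdec]
    have hx : ((a' * u + x0 : ℕ) : ZMod a) = ((a' * (i + s / a') + s % a' : ℕ) : ZMod a) := by
      rw [← hxe, hXz, hz1]; push_cast; ring
    have hx' := (cast_modc haa ha'pos hu hx0 (Nat.mod_lt s ha'pos)).mp hx
    have hj : s / a' < p := Nat.div_lt_of_lt_mul (by omega)
    refine ⟨hiw, s / a', hj, ?_⟩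
    rw [← hiw]; exact hx'.1.symm
  have extract_true : ∀ i : ℕ, i < c →
      z ∈ torusRect ((a' * i : ℕ) : ZMod a) ((b' * (i + 1) : ℕ) : ZMod b) a' (m * v) →
      i = u ∧ ∃ k, k < q ∧ (u + 1 + k) % c = w := by
    intro i hi hmem
    rw [mem_torusRect] at hmem
    obtain ⟨s, hs, t, ht, hz1, hz2⟩ := hmem
    have hx : ((a' * u + x0 : ℕ) : ZMod a) = ((a' * i + s : ℕ) : ZMod a) := by
      rw [hXz, hz1]; push_cast; ring
    have hx' := (cast_modc haa ha'pos hu hx0 hs).mp hx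
    have hiu : i = u := by rw [hx'.1, Nat.mod_eq_of_lt hi]
    have htdec := Nat.div_add_mod t b'
    have hye : b' * (i + 1) + t = b' * ((i + 1) + t / b') + t % b' := by
      rw [Nat.mul_add b' (i + 1) (t / b'), add_assoc, htdec]
    have hy : ((b' * w + y0 : ℕ) : ZMod b) = ((b' * ((i + 1) + t / b') + t % b' : ℕ) : ZMod b) := by
      rw [← hye, hYz, hz2]; push_cast; ring
    have hy' := (cast_modc hbb hb'pos hw hy0 (Nat.mod_lt t hb'pos)).mp hy
    have hk : t / b' < q := Nat.div_lt_of_lt_mul (by omega)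
    refine ⟨hiu, t / b', hk, ?_⟩
    rw [← hiu]; exact hy'.1.symm
  by_cases hdp : d < p
  · refine ⟨(w, false), ⟨by omega, ?_⟩, ?_⟩
    · show z ∈ torusRect ((a' * w : ℕ) : ZMod a) ((b' * w : ℕ) : ZMod b) (n * h) b'
      rw [mem_torusRect]
      refine ⟨a' * d + x0, ?_, y0, hy0, ?_, ?_⟩
      · have e : a' * (d + 1) ≤ a' * p := Nat.mul_le_mul_left _ (by omega)
        have e2 : a' * (d + 1) = a' * d + a' := by ring
        omega
      · have hxe : a' * w + (a' * d + x0) = a' * (w + d) + x0 := by ring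
        have hcast : ((a' * u + x0 : ℕ) : ZMod a) = ((a' * (w + d) + x0 : ℕ) : ZMod a) :=
          (cast_modc haa ha'pos hu hx0 hx0).mpr ⟨h1.symm, rfl⟩
        rw [← hXz, hcast, ← hxe]; push_cast; ring
      · rw [← hYz]; push_cast; ring
    · rintro ⟨i, bi⟩ ⟨hi, hmem⟩
      cases bi
      · obtain ⟨hiw, _⟩ := extract_false i (by omega) hmem
        rw [hiw]
      · obtain ⟨hiu, k, hk, hkw⟩ := extract_true i (by omega) hmem
        have := cancel_base (show k < c by omega) (show c - 1 - d < c by omega)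
          (hkw.trans h2.symm)
        omega
  · refine ⟨(u, true), ⟨by omega, ?_⟩, ?_⟩
    · show z ∈ torusRect ((a' * u : ℕ) : ZMod a) ((b' * (u + 1) : ℕ) : ZMod b) a' (m * v)
      rw [mem_torusRect]
      refine ⟨x0, hx0, b' * (c - 1 - d) + y0, ?_, ?_, ?_⟩
      · have e : b' * (c - 1 - d + 1) ≤ b' * q := Nat.mul_le_mul_left _ (by omega)
        have e2 : b' * (c - 1 - d + 1) = b' * (c - 1 - d) + b' := by ring
        omega
      · rw [← hXz]; push_cast; ring
      · have hye : b' * (u + 1) + (b' * (c - 1 - d) + y0) = b' * (u + 1 + (c - 1 - d)) + y0 := by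
          ring
        have hcast : ((b' * w + y0 : ℕ) : ZMod b) = ((b' * (u + 1 + (c - 1 - d)) + y0 : ℕ) : ZMod b) := by
          refine (cast_modc hbb hb'pos hw hy0 hy0).mpr ⟨?_, rfl⟩
          exact h2.symm
        rw [← hYz, hcast, ← hye]; push_cast; ring
    · rintro ⟨i, bi⟩ ⟨hi, hmem⟩
      cases bi
      · obtain ⟨hiw, j, hj, hju⟩ := extract_false i (by omega) hmem
        have := cancel_base (show j < c by omega) hdlt (hju.trans h1.symm)
        omega
      · obtain ⟨hiu, _⟩ := extract_true i (by omega) hmem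
        rw [hiu]
end

section
/- The rectangle R_{a×b} = {0,...,a-1} × {0,...,b-1} admits a tiling by horizontal bars of length h and vertical bars of length v such that every column contains exactly m vertical bars and every row contains exactly n horizontal bars, if and only if ab = amv + bnh, h divides a, and v divides b. -/
/-- A bar placement in the plane grid `ℕ × ℕ`: `(true, i, j)` is a vertical bar
anchored at `(i,j)` (its topmost cell), `(false, i, j)` a horizontal bar anchored at
`(i,j)` (its leftmost cell). -/
abbrev BarP := Bool × ℕ × ℕ

/-- The cells covered by a bar: a horizontal bar of length `h` at `(i,j)` covers
`(i,j),…,(i+h-1,j)`; a vertical bar of length `v` at `(i,j)` covers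
`(i,j),…,(i,j+v-1)`. -/
def barCells (h v : ℕ) (t : BarP) : Finset (ℕ × ℕ) :=
  if t.1 then (Finset.range v).image (fun s => (t.2.1, t.2.2 + s))
  else (Finset.range h).image (fun s => (t.2.1 + s, t.2.2))

/-- `T` is a tiling of the region `R` by horizontal bars of length `h` and vertical
bars of length `v`: all bars lie inside `R` and every cell of `R` is covered by
exactly one bar. -/
def IsTilingOf (h v : ℕ) (R : Finset (ℕ × ℕ)) (T : Finset BarP) : Prop :=
  (∀ t ∈ T, barCells h v t ⊆ R) ∧
  ∀ c ∈ R, ∃! t, t ∈ T ∧ c ∈ barCells h v t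

/-- Number of vertical bars of `T` lying in column `i`. -/
def vertCount (T : Finset BarP) (i : ℕ) : ℕ :=
  (T.filter (fun t => t.1 = true ∧ t.2.1 = i)).card

/-- Number of horizontal bars of `T` lying in row `j`. -/
def horizCount (T : Finset BarP) (j : ℕ) : ℕ :=
  (T.filter (fun t => t.1 = false ∧ t.2.2 = j)).card

/-- Number of horizontal bars of `T` whose leftmost cell is in column `i`. -/
def horizStartCount (T : Finset BarP) (i : ℕ) : ℕ :=
  (T.filter (fun t => t.1 = false ∧ t.2.1 = i)).card

/-- The rectangle `R_{a×b} = {0,…,a-1} × {0,…,b-1}`. -/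
def rectR (a b : ℕ) : Finset (ℕ × ℕ) := Finset.range a ×ˢ Finset.range b

lemma mem_barCells_true {h v i j : ℕ} {c : ℕ × ℕ} :
    c ∈ barCells h v (true, i, j) ↔ c.1 = i ∧ j ≤ c.2 ∧ c.2 < j + v := by
  rw [show barCells h v (true, i, j) = (Finset.range v).image (fun s => (i, j + s)) from rfl,
    Finset.mem_image]
  constructor
  · rintro ⟨s, hs, rfl⟩; rw [Finset.mem_range] at hs; simp; omega
  · rintro ⟨h1, h2, h3⟩
    exact ⟨c.2 - j, Finset.mem_range.2 (by omega), by rw [Prod.ext_iff]; simp [h1]; omega⟩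

lemma mem_barCells_false {h v i j : ℕ} {c : ℕ × ℕ} :
    c ∈ barCells h v (false, i, j) ↔ c.2 = j ∧ i ≤ c.1 ∧ c.1 < i + h := by
  rw [show barCells h v (false, i, j) = (Finset.range h).image (fun s => (i + s, j)) from rfl,
    Finset.mem_image]
  constructor
  · rintro ⟨s, hs, rfl⟩; rw [Finset.mem_range] at hs; simp; omega
  · rintro ⟨h1, h2, h3⟩
    exact ⟨c.1 - i, Finset.mem_range.2 (by omega), by rw [Prod.ext_iff]; simp [h1]; omega⟩

lemma card_barCells_true (h v i j : ℕ) : (barCells h v (true, i, j)).card = v := by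
  rw [show barCells h v (true, i, j) = (Finset.range v).image (fun s => (i, j + s)) from rfl,
    Finset.card_image_of_injective, Finset.card_range]
  intro s1 s2 hs; simpa using hs

lemma card_barCells_false (h v i j : ℕ) : (barCells h v (false, i, j)).card = h := by
  rw [show barCells h v (false, i, j) = (Finset.range h).image (fun s => (i + s, j)) from rfl,
    Finset.card_image_of_injective, Finset.card_range]
  intro s1 s2 hs; simpa using hs

lemma mem_rectR {a b : ℕ} {c : ℕ × ℕ} : c ∈ rectR a b ↔ c.1 < a ∧ c.2 < b := by
  simp [rectR]
lemma card_barCells (h v : ℕ) (t : BarP) :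
    (barCells h v t).card = if t.1 then v else h := by
  obtain ⟨bb, i, j⟩ := t
  cases bb <;> simp [card_barCells_true, card_barCells_false]

lemma biUnion_tiling {h v : ℕ} {R : Finset (ℕ × ℕ)} {T : Finset BarP}
    (hT : IsTilingOf h v R T) : T.biUnion (barCells h v) = R := by
  ext c
  rw [Finset.mem_biUnion]
  constructor
  · rintro ⟨t, ht, hc⟩; exact hT.1 t ht hc
  · intro hc; obtain ⟨t, ⟨ht, hc'⟩, _⟩ := hT.2 c hc; exact ⟨t, ht, hc'⟩

lemma card_region {h v : ℕ} {R : Finset (ℕ × ℕ)} {T : Finset BarP}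
    (hT : IsTilingOf h v R T) : R.card = ∑ t ∈ T, (barCells h v t).card := by
  rw [← biUnion_tiling hT]
  apply Finset.card_biUnion
  intro t1 ht1 t2 ht2 hne
  rw [Function.onFun, Finset.disjoint_left]
  intro c hc1 hc2
  obtain ⟨t, _, huniq⟩ := hT.2 c (hT.1 t1 ht1 hc1)
  exact hne ((huniq t1 ⟨ht1, hc1⟩).trans (huniq t2 ⟨ht2, hc2⟩).symm)

lemma anchor_mem_barCells {h v : ℕ} (hh : 1 ≤ h) (hv : 1 ≤ v) (t : BarP) :
    (t.2.1, t.2.2) ∈ barCells h v t := by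
  obtain ⟨bb, i, j⟩ := t
  cases bb
  · rw [mem_barCells_false]; simp; omega
  · rw [mem_barCells_true]; simp; omega

lemma vert_card {a b h v m : ℕ} (hh : 1 ≤ h) (hv : 1 ≤ v) {T : Finset BarP}
    (hT : IsTilingOf h v (rectR a b) T) (hvc : ∀ i < a, vertCount T i = m) :
    (T.filter (fun t => t.1 = true)).card = a * m := by
  rw [Finset.card_eq_sum_card_fiberwise (f := fun t => t.2.1) (t := Finset.range a)
    (fun t ht => by
      rw [Finset.mem_coe, Finset.mem_filter] at ht
      rw [Finset.mem_coe, Finset.mem_range]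
      have := hT.1 t ht.1 (anchor_mem_barCells hh hv t)
      exact (mem_rectR.1 this).1)]
  have : ∑ i ∈ Finset.range a,
      ((T.filter (fun t => t.1 = true)).filter (fun t => t.2.1 = i)).card
      = ∑ _i ∈ Finset.range a, m :=
    Finset.sum_congr rfl (fun i hi => by
      rw [Finset.filter_filter]; exact hvc i (Finset.mem_range.1 hi))
  rw [this]; simp [mul_comm]

lemma horiz_card {a b h v n : ℕ} (hh : 1 ≤ h) (hv : 1 ≤ v) {T : Finset BarP}
    (hT : IsTilingOf h v (rectR a b) T) (hhc : ∀ j < b, horizCount T j = n) :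
    (T.filter (fun t => t.1 = false)).card = b * n := by
  rw [Finset.card_eq_sum_card_fiberwise (f := fun t => t.2.2) (t := Finset.range b)
    (fun t ht => by
      rw [Finset.mem_coe, Finset.mem_filter] at ht
      rw [Finset.mem_coe, Finset.mem_range]
      have := hT.1 t ht.1 (anchor_mem_barCells hh hv t)
      exact (mem_rectR.1 this).2)]
  have : ∑ j ∈ Finset.range b,
      ((T.filter (fun t => t.1 = false)).filter (fun t => t.2.2 = j)).card
      = ∑ _j ∈ Finset.range b, n :=
    Finset.sum_congr rfl (fun j hj => by
      rw [Finset.filter_filter]; exact hhc j (Finset.mem_range.1 hj))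
  rw [this]; simp [mul_comm]

lemma forward_area {a b h v m n : ℕ} (hh : 1 ≤ h) (hv : 1 ≤ v) {T : Finset BarP}
    (hT : IsTilingOf h v (rectR a b) T) (hvc : ∀ i < a, vertCount T i = m)
    (hhc : ∀ j < b, horizCount T j = n) :
    a * b = a * m * v + b * n * h := by
  have h1 : (rectR a b).card = a * b := by simp [rectR]
  have h2 := card_region hT
  rw [h1] at h2
  rw [h2]
  have hc : ∑ t ∈ T, (barCells h v t).card = ∑ t ∈ T, (if t.1 then v else h) :=
    Finset.sum_congr rfl (fun t _ => card_barCells h v t)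
  rw [hc, Finset.sum_ite, Finset.sum_const, Finset.sum_const,
    smul_eq_mul, smul_eq_mul, vert_card hh hv hT hvc]
  have : Finset.filter (fun t => ¬t.1 = true) T = Finset.filter (fun t => t.1 = false) T := by
    apply Finset.filter_congr; intro t _; simp
  rw [this, horiz_card hh hv hT hhc]

/-- auxiliary: positions of "vertical" coarse blocks -/
def vblocks (m B N : ℕ) : Finset (ℕ × ℕ) :=
  (Finset.range N).image (fun p => (p / m, p % B))

lemma mem_vblocks {m B N I J : ℕ} :
    (I, J) ∈ vblocks m B N ↔ ∃ p < N, p / m = I ∧ p % B = J := by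
  unfold vblocks
  rw [Finset.mem_image]
  constructor
  · rintro ⟨p, hp, he⟩
    rw [Finset.mem_range] at hp
    rw [Prod.ext_iff] at he
    exact ⟨p, hp, he.1, he.2⟩
  · rintro ⟨p, hp, h1, h2⟩
    exact ⟨p, Finset.mem_range.2 hp, by rw [Prod.ext_iff]; exact ⟨h1, h2⟩⟩

lemma key_inj {m B : ℕ} (hm : 0 < m) (hmB : m ≤ B) {p1 p2 : ℕ}
    (hq : p1 / m = p2 / m) (hr : p1 % B = p2 % B) : p1 = p2 := by
  have key : ∀ q1 q2 : ℕ, q1 ≤ q2 → q1 / m = q2 / m → q1 % B = q2 % B → q1 = q2 := by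
    intro q1 q2 hle hq hr
    have hd : B ∣ q2 - q1 := (Nat.modEq_iff_dvd' hle).1 hr
    have h1 := Nat.div_add_mod q1 m
    have h2 := Nat.div_add_mod q2 m
    rw [← hq] at h2
    have h3 : q1 % m < m := Nat.mod_lt _ hm
    have h4 : q2 % m < m := Nat.mod_lt _ hm
    have h5 : q2 - q1 < m := by
      generalize m * (q1 / m) = X at h1 h2
      omega
    rcases Nat.eq_zero_or_pos (q2 - q1) with h0 | h0
    · omega
    · have := Nat.le_of_dvd h0 hd; omega
  rcases le_total p1 p2 with hle | hle
  · exact key _ _ hle hq hr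
  · exact (key _ _ hle hq.symm hr.symm).symm

lemma div_eq_of_between {q x k : ℕ} (hk : 0 < k) (h1 : k * q ≤ x) (h2 : x < k * q + k) :
    x / k = q := by
  have := Nat.div_add_mod x k
  have hlt : x % k < k := Nat.mod_lt _ hk
  have h3 : k * (x / k) ≤ x := Nat.mul_div_le x k
  rcases Nat.lt_trichotomy (x / k) q with hq | hq | hq
  · exfalso
    have : x / k + 1 ≤ q := hq
    have : k * (x / k + 1) ≤ k * q := Nat.mul_le_mul_left k this
    rw [Nat.mul_add, Nat.mul_one] at this
    omega
  · exact hq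
  · exfalso
    have : q + 1 ≤ x / k := hq
    have h7 : k * (q + 1) ≤ k * (x / k) := Nat.mul_le_mul_left k this
    rw [Nat.mul_add, Nat.mul_one] at h7
    omega

lemma colS {m B A : ℕ} (hm : 0 < m) (hB : 0 < B) (hmB : m ≤ B) {I : ℕ} (hI : I < A) :
    ((Finset.range B).filter (fun J => (I, J) ∈ vblocks m B (A * m))).card = m := by
  have hset : (Finset.range B).filter (fun J => (I, J) ∈ vblocks m B (A * m))
      = (Finset.Ico (I * m) (I * m + m)).image (fun p => p % B) := by
    ext J
    rw [Finset.mem_filter, Finset.mem_range, Finset.mem_image, mem_vblocks]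
    constructor
    · rintro ⟨hJB, p, hp, hdiv, hmod⟩
      have e1 : m * (p / m) ≤ p := Nat.mul_div_le p m
      have e2 := Nat.div_add_mod p m
      have e3 : p % m < m := Nat.mod_lt _ hm
      rw [hdiv] at e1 e2
      have e4 : m * I = I * m := Nat.mul_comm m I
      exact ⟨p, Finset.mem_Ico.2 ⟨by omega, by omega⟩, hmod⟩
    · rintro ⟨p, hp, rfl⟩
      rw [Finset.mem_Ico] at hp
      have e4 : m * I = I * m := Nat.mul_comm m I
      have hdiv : p / m = I := div_eq_of_between hm (by omega) (by omega)
      refine ⟨Nat.mod_lt _ hB, p, ?_, hdiv, rfl⟩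
      have : I + 1 ≤ A := hI
      have := Nat.mul_le_mul_right m this
      rw [Nat.add_mul, Nat.one_mul] at this
      omega
  rw [hset, Finset.card_image_of_injOn, Nat.card_Ico]
  · omega
  · intro p1 hp1 p2 hp2 hr
    rw [Finset.mem_coe, Finset.mem_Ico] at hp1 hp2
    have e4 : m * I = I * m := Nat.mul_comm m I
    have hd1 : p1 / m = I := div_eq_of_between hm (by omega) (by omega)
    have hd2 : p2 / m = I := div_eq_of_between hm (by omega) (by omega)
    exact key_inj hm hmB (hd1.trans hd2.symm) hr

lemma count_residue {B K J : ℕ} (hB : 0 < B) (hJ : J < B) :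
    ((Finset.range (B * K)).filter (fun p => p % B = J)).card = K := by
  have hset : (Finset.range (B * K)).filter (fun p => p % B = J)
      = (Finset.range K).image (fun q => q * B + J) := by
    ext p
    rw [Finset.mem_filter, Finset.mem_range, Finset.mem_image]
    constructor
    · rintro ⟨hp, hmod⟩
      have e4 : B * K = K * B := Nat.mul_comm B K
      have e5 : B * (p / B) = (p / B) * B := Nat.mul_comm B (p / B)
      have e6 := Nat.div_add_mod p B
      refine ⟨p / B, Finset.mem_range.2 ?_, ?_⟩
      · rw [Nat.div_lt_iff_lt_mul hB]; omega
      · omega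
    · rintro ⟨q, hq, rfl⟩
      rw [Finset.mem_range] at hq
      constructor
      · have h1 : q + 1 ≤ K := hq
        have h2 := Nat.mul_le_mul_right B h1
        rw [Nat.add_mul, Nat.one_mul] at h2
        have e4 : B * K = K * B := Nat.mul_comm B K
        omega
      · rw [Nat.add_comm, Nat.add_mul_mod_self_right]
        exact Nat.mod_eq_of_lt hJ
  rw [hset, Finset.card_image_of_injective, Finset.card_range]
  intro q1 q2 he
  have he' : q1 * B + J = q2 * B + J := he
  have : q1 * B = q2 * B := by omega
  exact Nat.eq_of_mul_eq_mul_right hB this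

lemma rowS {m B A K : ℕ} (hm : 0 < m) (hB : 0 < B) (hmB : m ≤ B)
    (hK : A * m = B * K) {J : ℕ} (hJ : J < B) :
    ((Finset.range A).filter (fun I => (I, J) ∈ vblocks m B (A * m))).card = K := by
  have hset : (Finset.range A).filter (fun I => (I, J) ∈ vblocks m B (A * m))
      = ((Finset.range (A * m)).filter (fun p => p % B = J)).image (fun p => p / m) := by
    ext I
    rw [Finset.mem_filter, Finset.mem_range, Finset.mem_image, mem_vblocks]
    constructor
    · rintro ⟨hIA, p, hp, hdiv, hmod⟩
      exact ⟨p, Finset.mem_filter.2 ⟨Finset.mem_range.2 hp, hmod⟩, hdiv⟩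
    · rintro ⟨p, hp, rfl⟩
      rw [Finset.mem_filter, Finset.mem_range] at hp
      constructor
      · rw [Nat.div_lt_iff_lt_mul hm]; omega
      · exact ⟨p, hp.1, rfl, hp.2⟩
  rw [hset, Finset.card_image_of_injOn]
  · rw [hK, count_residue hB hJ]
  · intro p1 hp1 p2 hp2 hdiv
    rw [Finset.mem_coe, Finset.mem_filter] at hp1 hp2
    exact key_inj hm hmB hdiv (hp1.2.trans hp2.2.symm)
/-- Number of horizontal bars covering some cell of column `i`. -/
def colCov (h : ℕ) (T : Finset BarP) (i : ℕ) : ℕ :=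
  (T.filter (fun t => t.1 = false ∧ t.2.1 ≤ i ∧ i < t.2.1 + h)).card

lemma col_equation {a b h v m : ℕ} (hh : 1 ≤ h) (hv : 1 ≤ v) {T : Finset BarP}
    (hT : IsTilingOf h v (rectR a b) T) (hvc : ∀ i < a, vertCount T i = m)
    {i : ℕ} (hia : i < a) : b = m * v + colCov h T i := by
  classical
  set col : Finset (ℕ × ℕ) := ({i} : Finset ℕ) ×ˢ Finset.range b with hcol
  have hmemcol : ∀ c : ℕ × ℕ, c ∈ col ↔ c.1 = i ∧ c.2 < b := by
    intro c; simp only [hcol, Finset.mem_product, Finset.mem_singleton, Finset.mem_range]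
  have hcolR : ∀ c ∈ col, c ∈ rectR a b := by
    intro c hc; rw [hmemcol] at hc; rw [mem_rectR]; omega
  have hcard : col.card = b := by simp [hcol]
  -- col is the disjoint union of the intersections with the bars
  have hun : col = T.biUnion (fun t => barCells h v t ∩ col) := by
    ext c
    rw [Finset.mem_biUnion]
    constructor
    · intro hc
      obtain ⟨t, ⟨ht, hct⟩, _⟩ := hT.2 c (hcolR c hc)
      exact ⟨t, ht, Finset.mem_inter.2 ⟨hct, hc⟩⟩
    · rintro ⟨t, ht, hc⟩; exact (Finset.mem_inter.1 hc).2
  have hdisj : ∀ t1 ∈ T, ∀ t2 ∈ T, t1 ≠ t2 →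
      Disjoint (barCells h v t1 ∩ col) (barCells h v t2 ∩ col) := by
    intro t1 ht1 t2 ht2 hne
    rw [Finset.disjoint_left]
    intro c hc1 hc2
    rw [Finset.mem_inter] at hc1 hc2
    obtain ⟨t, _, huniq⟩ := hT.2 c (hT.1 t1 ht1 hc1.1)
    exact hne ((huniq t1 ⟨ht1, hc1.1⟩).trans (huniq t2 ⟨ht2, hc2.1⟩).symm)
  have hb : b = ∑ t ∈ T, (barCells h v t ∩ col).card := by
    rw [← hcard]
    conv_lhs => rw [hun]
    exact Finset.card_biUnion hdisj
  -- compute each term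
  have hterm : ∀ t ∈ T, (barCells h v t ∩ col).card =
      (if t.1 = true ∧ t.2.1 = i then v else 0) +
      (if t.1 = false ∧ t.2.1 ≤ i ∧ i < t.2.1 + h then 1 else 0) := by
    rintro ⟨bb, x, yy⟩ ht
    cases bb
    · -- horizontal bar
      simp only [Bool.false_eq_true, false_and, if_neg, true_and, if_false, zero_add]
      by_cases hcov : x ≤ i ∧ i < x + h
      · rw [if_pos hcov]
        have : barCells h v (false, x, yy) ∩ col = {(i, yy)} := by
          ext c
          rw [Finset.mem_inter, mem_barCells_false, hmemcol, Finset.mem_singleton,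
            Prod.ext_iff]
          constructor
          · rintro ⟨⟨h1, h2, h3⟩, h4, h5⟩; exact ⟨h4, h1⟩
          · rintro ⟨h4, h5⟩
            have hyb : ((x, yy) : ℕ × ℕ) ∈ rectR a b := by
              apply hT.1 _ ht
              rw [mem_barCells_false]; simp; omega
            rw [mem_rectR] at hyb
            have hyb2 : yy < b := hyb.2
            have hc1 : c.1 = i := h4
            exact ⟨⟨h5, by omega, by omega⟩, hc1, by omega⟩
        rw [this]; simp
      · rw [if_neg hcov]
        have : barCells h v (false, x, yy) ∩ col = ∅ := by
          ext c
          rw [Finset.mem_inter, mem_barCells_false, hmemcol]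
          simp only [Finset.notMem_empty, iff_false]
          rintro ⟨⟨h1, h2, h3⟩, h4, h5⟩
          exact hcov ⟨by omega, by omega⟩
        rw [this]; simp
    · -- vertical bar
      simp only [true_and, Bool.true_eq_false, false_and, if_false, add_zero]
      by_cases hcol' : x = i
      · rw [if_pos hcol']
        subst hcol'
        have : barCells h v (true, x, yy) ∩ col = barCells h v (true, x, yy) := by
          apply Finset.inter_eq_left.2
          intro c hc
          have hcR := hT.1 _ ht hc
          rw [mem_rectR] at hcR
          rw [mem_barCells_true] at hc
          rw [hmemcol]
          exact ⟨hc.1, hcR.2⟩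
        rw [this]
        rw [show barCells h v (true, x, yy) = (Finset.range v).image (fun s => (x, yy + s)) from rfl,
          Finset.card_image_of_injective, Finset.card_range]
        intro s1 s2 hs; simpa using hs
      · rw [if_neg hcol']
        have : barCells h v (true, x, yy) ∩ col = ∅ := by
          ext c
          rw [Finset.mem_inter, mem_barCells_true, hmemcol]
          simp only [Finset.notMem_empty, iff_false]
          rintro ⟨⟨h1, h2, h3⟩, h4, h5⟩
          exact hcol' (h1 ▸ h4)
        rw [this]; simp
  have hsum : ∑ t ∈ T, (barCells h v t ∩ col).card =
      ∑ t ∈ T, ((if t.1 = true ∧ t.2.1 = i then v else 0) +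
        (if t.1 = false ∧ t.2.1 ≤ i ∧ i < t.2.1 + h then 1 else 0)) :=
    Finset.sum_congr rfl hterm
  simp only [Finset.sum_add_distrib, Finset.sum_ite, Finset.sum_const,
    Finset.sum_const_zero, add_zero, smul_eq_mul, mul_one, mul_zero] at hsum
  rw [hsum] at hb
  rw [hb]
  have h1 : (Finset.filter (fun t => t.1 = true ∧ t.2.1 = i) T).card = m := hvc i hia
  rw [h1]
  rfl

lemma colCov_window {h : ℕ} (hh : 1 ≤ h) (T : Finset BarP) (i : ℕ) :
    colCov h T i = ∑ j ∈ Finset.Ico (i + 1 - h) (i + 1), horizStartCount T j := by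
  unfold colCov
  rw [Finset.card_eq_sum_card_fiberwise (f := fun t => t.2.1)
    (t := Finset.Ico (i + 1 - h) (i + 1))
    (fun t ht => by
      rw [Finset.mem_coe, Finset.mem_filter] at ht
      obtain ⟨-, -, h2, h3⟩ := ht
      simp only [Finset.mem_coe, Finset.mem_Ico]
      omega)]
  apply Finset.sum_congr rfl
  intro j hj
  rw [Finset.mem_Ico] at hj
  rw [Finset.filter_filter]
  unfold horizStartCount
  congr 1
  apply Finset.filter_congr
  intro t _
  constructor
  · rintro ⟨⟨h1, _, _⟩, h4⟩; exact ⟨h1, h4⟩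
  · rintro ⟨h1, h4⟩; exact ⟨⟨h1, by omega, by omega⟩, h4⟩

lemma fit_bound {a b h v : ℕ} (hh : 1 ≤ h) {T : Finset BarP}
    (hT : IsTilingOf h v (rectR a b) T) {j : ℕ} (hs : horizStartCount T j ≠ 0) :
    j + h ≤ a := by
  rw [horizStartCount, Finset.card_ne_zero] at hs
  obtain ⟨t, ht⟩ := hs.exists_mem
  rw [Finset.mem_filter] at ht
  obtain ⟨ht, h1, h2⟩ := ht
  obtain ⟨bb, x, y⟩ := t
  have h1' : bb = false := h1
  have h2' : x = j := h2
  subst h1' h2' 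
  have : ((x + (h - 1), y) : ℕ × ℕ) ∈ barCells h v (false, x, y) := by
    rw [mem_barCells_false]; simp; omega
  have := hT.1 _ ht this
  rw [mem_rectR] at this
  have h3 : x + (h - 1) < a := this.1
  omega

lemma start_profile {a b h v m n : ℕ} (ha : 1 ≤ a) (hb : 1 ≤ b) (hh : 1 ≤ h)
    (hv : 1 ≤ v) (hm : 1 ≤ m) (hn : 1 ≤ n) {T : Finset BarP}
    (hT : IsTilingOf h v (rectR a b) T) (hvc : ∀ i < a, vertCount T i = m)
    (hhc : ∀ j < b, horizCount T j = n) :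
    ∀ i < a, horizStartCount T i = if h ∣ i then b - m * v else 0 := by
  set c := b - m * v with hc
  have hcol : ∀ i < a, b = m * v + colCov h T i := fun i hi => col_equation hh hv hT hvc hi
  have hcc : ∀ i < a, colCov h T i = c := by
    intro i hi; have := hcol i hi; omega
  intro i
  induction i using Nat.strong_induction_on with
  | _ i IH =>
    intro hia
    have hwin : c = ∑ j ∈ Finset.Ico (i + 1 - h) (i + 1), horizStartCount T j := by
      rw [← colCov_window hh, hcc i hia]
    rw [Finset.sum_Ico_succ_top (by omega : i + 1 - h ≤ i)] at hwin
    have hprev : ∑ j ∈ Finset.Ico (i + 1 - h) i, horizStartCount T j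
        = ∑ j ∈ Finset.Ico (i + 1 - h) i, (if h ∣ j then c else 0) := by
      apply Finset.sum_congr rfl
      intro j hj
      rw [Finset.mem_Ico] at hj
      exact IH j (by omega) (by omega)
    rw [hprev] at hwin
    by_cases hdvd : h ∣ i
    · rw [if_pos hdvd]
      have hzero : ∑ j ∈ Finset.Ico (i + 1 - h) i, (if h ∣ j then c else 0) = 0 := by
        apply Finset.sum_eq_zero
        intro j hj
        rw [Finset.mem_Ico] at hj
        rw [if_neg]
        intro hdj
        have hd : h ∣ i - j := Nat.dvd_sub hdvd hdj
        have h1 : i - j ≠ 0 := by omega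
        have := Nat.le_of_dvd (by omega) hd
        omega
      omega
    · rw [if_neg hdvd]
      have hmod := Nat.div_add_mod i h
      have hmlt : i % h < h := Nat.mod_lt _ (by omega)
      have hmne : i % h ≠ 0 := fun hc0 => hdvd (Nat.dvd_of_mod_eq_zero hc0)
      set j0 := h * (i / h) with hj0
      have hj0d : h ∣ j0 := Dvd.intro _ rfl
      have hj0mem : j0 ∈ Finset.Ico (i + 1 - h) i := by
        rw [Finset.mem_Ico]; omega
      have hone : ∑ j ∈ Finset.Ico (i + 1 - h) i, (if h ∣ j then c else 0) = c := by
        rw [Finset.sum_eq_single_of_mem j0 hj0mem]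
        · rw [if_pos hj0d]
        · intro j hj hne
          rw [Finset.mem_Ico] at hj
          rw [if_neg]
          intro hdj
          rcases Nat.le_total j j0 with hle | hle
          · have hd : h ∣ j0 - j := Nat.dvd_sub hj0d hdj
            have : j0 - j = 0 ∨ h ≤ j0 - j := by
              rcases Nat.eq_zero_or_pos (j0 - j) with h0 | h0
              · exact Or.inl h0
              · exact Or.inr (Nat.le_of_dvd h0 hd)
            omega
          · have hd : h ∣ j - j0 := Nat.dvd_sub hdj hj0d
            have : j - j0 = 0 ∨ h ≤ j - j0 := by
              rcases Nat.eq_zero_or_pos (j - j0) with h0 | h0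
              · exact Or.inl h0
              · exact Or.inr (Nat.le_of_dvd h0 hd)
            omega
      omega

lemma dvd_of_tiling {a b h v m n : ℕ} (ha : 1 ≤ a) (hb : 1 ≤ b) (hh : 1 ≤ h)
    (hv : 1 ≤ v) (hm : 1 ≤ m) (hn : 1 ≤ n) {T : Finset BarP}
    (hT : IsTilingOf h v (rectR a b) T) (hvc : ∀ i < a, vertCount T i = m)
    (hhc : ∀ j < b, horizCount T j = n) : h ∣ a := by
  have harea := forward_area hh hv hT hvc hhc
  have hcol := col_equation hh hv hT hvc (show 0 < a by omega)
  set c := b - m * v with hcdef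
  have hbmvc : b = m * v + c := by omega
  -- a * c = b * n * h > 0, hence c > 0
  have hac : a * c = b * n * h := by
    have h1 : a * b = a * (m * v) + a * c := by rw [hbmvc]; ring
    have h2 : a * (m * v) + a * c = a * (m * v) + b * n * h := by
      rw [← h1, harea]; ring
    omega
  have hcpos : 0 < c := by
    rcases Nat.eq_zero_or_pos c with h0 | h0
    · exfalso
      rw [h0, mul_zero] at hac
      have : 0 < b * n * h := by positivity
      omega
    · exact h0
  have hprof := start_profile ha hb hh hv hm hn hT hvc hhc
  have hmod := Nat.div_add_mod (a - 1) h
  have hmlt : (a - 1) % h < h := Nat.mod_lt _ (by omega)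
  set j0 := h * ((a - 1) / h) with hj0
  have hj0lt : j0 < a := by omega
  have hsj0 : horizStartCount T j0 = c := by
    rw [hprof j0 hj0lt, if_pos (Dvd.intro _ rfl)]
  have hfit : j0 + h ≤ a := fit_bound hh hT (by rw [hsj0]; omega)
  have haeq : a = j0 + h := by omega
  exact ⟨(a - 1) / h + 1, by rw [mul_add, mul_one]; omega⟩
def swapBar (t : BarP) : BarP := (!t.1, t.2.2, t.2.1)

lemma swapBar_invol (t : BarP) : swapBar (swapBar t) = t := by
  obtain ⟨bb, x, y⟩ := t; simp [swapBar]

lemma swapBar_inj : Function.Injective swapBar :=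
  Function.LeftInverse.injective swapBar_invol

lemma mem_barCells_swap {h v : ℕ} {t : BarP} {c : ℕ × ℕ} :
    c ∈ barCells v h (swapBar t) ↔ c.swap ∈ barCells h v t := by
  obtain ⟨bb, x, y⟩ := t
  obtain ⟨cx, cy⟩ := c
  cases bb
  · rw [show swapBar (false, x, y) = (true, y, x) from rfl, mem_barCells_true,
      mem_barCells_false]
    simp [Prod.swap]
  · rw [show swapBar (true, x, y) = (false, y, x) from rfl, mem_barCells_false,
      mem_barCells_true]
    simp [Prod.swap]

lemma tiling_swap {a b h v : ℕ} {T : Finset BarP}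
    (hT : IsTilingOf h v (rectR a b) T) :
    IsTilingOf v h (rectR b a) (T.image swapBar) := by
  constructor
  · intro t' ht'
    rw [Finset.mem_image] at ht'
    obtain ⟨t, ht, rfl⟩ := ht'
    intro c hc
    rw [mem_barCells_swap] at hc
    have := hT.1 t ht hc
    rw [mem_rectR] at this ⊢
    simp only [Prod.fst_swap, Prod.snd_swap] at this
    exact ⟨this.2, this.1⟩
  · intro c hc
    rw [mem_rectR] at hc
    have hcs : c.swap ∈ rectR a b := by
      rw [mem_rectR]; simp; exact ⟨hc.2, hc.1⟩
    obtain ⟨t, ⟨ht, hct⟩, huniq⟩ := hT.2 c.swap hcs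
    refine ⟨swapBar t, ⟨Finset.mem_image_of_mem _ ht, ?_⟩, ?_⟩
    · rw [mem_barCells_swap]; exact hct
    · rintro t' ⟨ht', hct'⟩
      rw [Finset.mem_image] at ht'
      obtain ⟨t'', ht'', rfl⟩ := ht'
      rw [mem_barCells_swap] at hct'
      rw [huniq t'' ⟨ht'', hct'⟩]

lemma vertCount_swap (T : Finset BarP) (i : ℕ) :
    vertCount (T.image swapBar) i = horizCount T i := by
  unfold vertCount horizCount
  rw [Finset.filter_image, Finset.card_image_of_injective _ swapBar_inj]
  congr 1
  apply Finset.filter_congr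
  intro t _
  obtain ⟨bb, x, y⟩ := t
  cases bb <;> simp [swapBar]

lemma horizCount_swap (T : Finset BarP) (j : ℕ) :
    horizCount (T.image swapBar) j = vertCount T j := by
  unfold vertCount horizCount
  rw [Finset.filter_image, Finset.card_image_of_injective _ swapBar_inj]
  congr 1
  apply Finset.filter_congr
  intro t _
  obtain ⟨bb, x, y⟩ := t
  cases bb <;> simp [swapBar]
lemma aligned {k y' y : ℕ} (hk : 0 < k) (h0 : y' % k = 0) (h1 : y' ≤ y) (h2 : y < y' + k) :
    y' = k * (y / k) := by
  have e1 := Nat.div_add_mod y' k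
  rw [h0, Nat.add_zero] at e1
  have e2 : y / k = y' / k := div_eq_of_between hk (by omega) (by omega)
  rw [e2, e1]

lemma construction {a b h v m n : ℕ} (ha : 1 ≤ a) (hb : 1 ≤ b) (hh : 1 ≤ h)
    (hv : 1 ≤ v) (hm : 1 ≤ m) (hn : 1 ≤ n)
    (harea : a * b = a * m * v + b * n * h) (hha : h ∣ a) (hvb : v ∣ b) :
    ∃ T : Finset BarP, IsTilingOf h v (rectR a b) T ∧
      (∀ i < a, vertCount T i = m) ∧ (∀ j < b, horizCount T j = n) := by
  obtain ⟨A, hA⟩ := hha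
  obtain ⟨B, hB⟩ := hvb
  have hA1 : 0 < A := by
    rcases Nat.eq_zero_or_pos A with h0 | h0
    · rw [h0, Nat.mul_zero] at hA; omega
    · exact h0
  have hB1 : 0 < B := by
    rcases Nat.eq_zero_or_pos B with h0 | h0
    · rw [h0, Nat.mul_zero] at hB; omega
    · exact h0
  have hAB : A * B = A * m + B * n := by
    have e1 : (h * v) * (A * B) = (h * v) * (A * m + B * n) := by
      calc (h * v) * (A * B) = (h * A) * (v * B) := by ring
        _ = (h * A) * m * v + (v * B) * n * h := by rw [← hA, ← hB]; exact harea
        _ = (h * v) * (A * m + B * n) := by ring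
    exact Nat.eq_of_mul_eq_mul_left (by positivity) e1
  have hmB : m ≤ B := by
    refine Nat.le_of_mul_le_mul_left ?_ hA1
    omega
  have hnA : n ≤ A := by
    refine Nat.le_of_mul_le_mul_left ?_ hB1
    have e : A * B = B * A := Nat.mul_comm A B
    omega
  have hK : A * m = B * (A - n) := by
    have h1 : B * n + B * (A - n) = B * A := by
      rw [← Nat.mul_add]
      congr 1
      omega
    have h2 : B * A = A * B := Nat.mul_comm B A
    omega
  set S := vblocks m B (A * m) with hS
  set T : Finset BarP := ((Finset.univ : Finset Bool) ×ˢ rectR a b).filter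
    (fun t => if t.1 then ((t.2.1 / h, t.2.2 / v) ∈ S ∧ t.2.2 % v = 0)
      else ((t.2.1 / h, t.2.2 / v) ∉ S ∧ t.2.1 % h = 0)) with hT
  have hmemT : ∀ t : BarP, t ∈ T ↔ t.2.1 < a ∧ t.2.2 < b ∧
      (if t.1 then ((t.2.1 / h, t.2.2 / v) ∈ S ∧ t.2.2 % v = 0)
        else ((t.2.1 / h, t.2.2 / v) ∉ S ∧ t.2.1 % h = 0)) := by
    intro t
    rw [hT, Finset.mem_filter, Finset.mem_product, mem_rectR]
    simp only [Finset.mem_univ, true_and]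
    rw [and_assoc]
  have hXlt : ∀ x < a, x / h < A := by
    intro x hx
    rw [Nat.div_lt_iff_lt_mul (by omega)]
    have e : h * A = A * h := Nat.mul_comm h A
    omega
  have hYlt : ∀ y < b, y / v < B := by
    intro y hy
    rw [Nat.div_lt_iff_lt_mul (by omega)]
    have e : v * B = B * v := Nat.mul_comm v B
    omega
  refine ⟨T, ⟨?_, ?_⟩, ?_, ?_⟩
  · -- all bars inside the rectangle
    rintro ⟨bb, x', y'⟩ ht c hc
    rw [hmemT] at ht
    obtain ⟨hx', hy', hP⟩ := ht
    have hx2 : x' < a := hx'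
    have hy2 : y' < b := hy'
    rw [mem_rectR]
    cases bb
    · have hP' : ((x' / h, y' / v) ∉ S ∧ x' % h = 0) := hP
      rw [mem_barCells_false] at hc
      have e1 := Nat.div_add_mod x' h
      have e2 : x' / h < A := hXlt x' hx'
      have e3 : h * (x' / h + 1) ≤ h * A := Nat.mul_le_mul_left h e2
      rw [Nat.mul_add, Nat.mul_one] at e3
      have hP2 : x' % h = 0 := hP'.2
      constructor
      · rw [hA]; omega
      · omega
    · have hP' : ((x' / h, y' / v) ∈ S ∧ y' % v = 0) := hP
      rw [mem_barCells_true] at hc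
      have e1 := Nat.div_add_mod y' v
      have e2 : y' / v < B := hYlt y' hy'
      have e3 : v * (y' / v + 1) ≤ v * B := Nat.mul_le_mul_left v e2
      rw [Nat.mul_add, Nat.mul_one] at e3
      have hP2 : y' % v = 0 := hP'.2
      constructor
      · omega
      · rw [hB]; omega
  · -- exact cover
    rintro ⟨x, y⟩ hc
    rw [mem_rectR] at hc
    obtain ⟨hxa, hyb⟩ := hc
    have hxa' : x < a := hxa
    have hyb' : y < b := hyb
    have hX : x / h < A := hXlt x hxa
    have hY : y / v < B := hYlt y hyb
    have hxd := Nat.div_add_mod x h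
    have hxm : x % h < h := Nat.mod_lt _ (by omega)
    have hyd := Nat.div_add_mod y v
    have hym : y % v < v := Nat.mod_lt _ (by omega)
    by_cases hSm : (x / h, y / v) ∈ S
    · refine ⟨(true, x, v * (y / v)), ⟨?_, ?_⟩, ?_⟩
      · rw [hmemT]
        have hvy : v * (y / v) < b := by rw [hB]; omega
        refine ⟨hxa', hvy, ?_⟩
        have : ((x / h, (v * (y / v)) / v) ∈ S ∧ (v * (y / v)) % v = 0) := by
          rw [Nat.mul_div_cancel_left _ (by omega : 0 < v)]
          exact ⟨hSm, Nat.mul_mod_right v _⟩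
        exact this
      · rw [mem_barCells_true]
        exact ⟨rfl, by omega, by omega⟩
      · rintro ⟨bb, x', y'⟩ ⟨ht', hc'⟩
        rw [hmemT] at ht'
        obtain ⟨hx', hy', hP⟩ := ht'
        cases bb
        · exfalso
          have hP' : ((x' / h, y' / v) ∉ S ∧ x' % h = 0) := hP
          rw [mem_barCells_false] at hc'
          obtain ⟨hcy, hcx1, hcx2⟩ := hc'
          have hal : x' = h * (x / h) := aligned (by omega) hP'.2 hcx1 hcx2
          have : x' / h = x / h := by
            rw [hal, Nat.mul_div_cancel_left _ (by omega : 0 < h)]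
          have hcy2 : y = y' := hcy
          apply hP'.1
          rw [this, ← hcy2]
          exact hSm
        · have hP' : ((x' / h, y' / v) ∈ S ∧ y' % v = 0) := hP
          rw [mem_barCells_true] at hc'
          obtain ⟨hcx, hcy1, hcy2⟩ := hc'
          have hal : y' = v * (y / v) := aligned (by omega) hP'.2 hcy1 hcy2
          simp only [Prod.mk.injEq]
          exact ⟨by trivial, hcx.symm, hal⟩
    · refine ⟨(false, h * (x / h), y), ⟨?_, ?_⟩, ?_⟩
      · rw [hmemT]
        have hhx : h * (x / h) < a := by rw [hA]; omega
        refine ⟨hhx, hyb', ?_⟩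
        have : ((h * (x / h)) / h, y / v) ∉ S ∧ (h * (x / h)) % h = 0 := by
          rw [Nat.mul_div_cancel_left _ (by omega : 0 < h)]
          exact ⟨hSm, Nat.mul_mod_right h _⟩
        exact this
      · rw [mem_barCells_false]
        exact ⟨rfl, by omega, by omega⟩
      · rintro ⟨bb, x', y'⟩ ⟨ht', hc'⟩
        rw [hmemT] at ht'
        obtain ⟨hx', hy', hP⟩ := ht'
        cases bb
        · have hP' : ((x' / h, y' / v) ∉ S ∧ x' % h = 0) := hP
          rw [mem_barCells_false] at hc'
          obtain ⟨hcy, hcx1, hcx2⟩ := hc'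
          have hal : x' = h * (x / h) := aligned (by omega) hP'.2 hcx1 hcx2
          simp only [Prod.mk.injEq]
          exact ⟨by trivial, hal, hcy.symm⟩
        · exfalso
          have hP' : ((x' / h, y' / v) ∈ S ∧ y' % v = 0) := hP
          rw [mem_barCells_true] at hc'
          obtain ⟨hcx, hcy1, hcy2⟩ := hc'
          have hal : y' = v * (y / v) := aligned (by omega) hP'.2 hcy1 hcy2
          apply hSm
          have e1 : y' / v = y / v := by
            rw [hal, Nat.mul_div_cancel_left _ (by omega : 0 < v)]
          have hcx2 : x = x' := hcx
          rw [← e1, hcx2]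
          exact hP'.1
  · -- vertical counts
    intro i hi
    unfold vertCount
    have hset : T.filter (fun t => t.1 = true ∧ t.2.1 = i)
        = ((Finset.range B).filter (fun J => (i / h, J) ∈ S)).image
            (fun J => ((true, i, v * J) : BarP)) := by
      ext ⟨bb, x', y'⟩
      rw [Finset.mem_filter, hmemT, Finset.mem_image]
      constructor
      · rintro ⟨⟨hx', hy', hP⟩, hbb, hxi⟩
        have hbb' : bb = true := hbb
        subst hbb'
        have hxi' : x' = i := hxi
        subst hxi'
        have hP' : ((x' / h, y' / v) ∈ S ∧ y' % v = 0) := hP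
        refine ⟨y' / v, Finset.mem_filter.2 ⟨Finset.mem_range.2 (hYlt y' hy'), hP'.1⟩, ?_⟩
        have e1 := Nat.div_add_mod y' v
        have e2 : y' % v = 0 := hP'.2
        simp only [Prod.mk.injEq]
        exact ⟨by trivial, by trivial, by omega⟩
      · rintro ⟨J, hJ, he⟩
        rw [Finset.mem_filter, Finset.mem_range] at hJ
        rw [Prod.mk.injEq] at he
        obtain ⟨he1, he2⟩ := he
        rw [Prod.mk.injEq] at he2
        obtain ⟨he2, he3⟩ := he2
        subst he1; subst he2; subst he3
        have e3 : v * (J + 1) ≤ v * B := Nat.mul_le_mul_left v hJ.1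
        rw [Nat.mul_add, Nat.mul_one] at e3
        have hvJ : v * J < b := by rw [hB]; omega
        refine ⟨⟨hi, hvJ, ?_⟩, by trivial, by trivial⟩
        have : ((i / h, (v * J) / v) ∈ S ∧ (v * J) % v = 0) := by
          rw [Nat.mul_div_cancel_left _ (by omega : 0 < v)]
          exact ⟨hJ.2, Nat.mul_mod_right v _⟩
        exact this
    rw [hset, Finset.card_image_of_injective, colS (by omega) hB1 hmB (hXlt i hi)]
    intro J1 J2 he
    rw [Prod.mk.injEq] at he
    have := he.2
    rw [Prod.mk.injEq] at this
    exact Nat.eq_of_mul_eq_mul_left (by omega : 0 < v) this.2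
  · -- horizontal counts
    intro j hj
    unfold horizCount
    have hset : T.filter (fun t => t.1 = false ∧ t.2.2 = j)
        = ((Finset.range A).filter (fun I => (I, j / v) ∉ S)).image
            (fun I => ((false, h * I, j) : BarP)) := by
      ext ⟨bb, x', y'⟩
      rw [Finset.mem_filter, hmemT, Finset.mem_image]
      constructor
      · rintro ⟨⟨hx', hy', hP⟩, hbb, hyj⟩
        have hbb' : bb = false := hbb
        subst hbb'
        have hyj' : y' = j := hyj
        subst hyj'
        have hP' : ((x' / h, y' / v) ∉ S ∧ x' % h = 0) := hP
        refine ⟨x' / h, Finset.mem_filter.2 ⟨Finset.mem_range.2 (hXlt x' hx'), hP'.1⟩, ?_⟩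
        have e1 := Nat.div_add_mod x' h
        have e2 : x' % h = 0 := hP'.2
        simp only [Prod.mk.injEq]
        exact ⟨by trivial, by omega, by trivial⟩
      · rintro ⟨I, hI, he⟩
        rw [Finset.mem_filter, Finset.mem_range] at hI
        rw [Prod.mk.injEq] at he
        obtain ⟨he1, he2⟩ := he
        rw [Prod.mk.injEq] at he2
        obtain ⟨he2, he3⟩ := he2
        subst he1; subst he2; subst he3
        have e3 : h * (I + 1) ≤ h * A := Nat.mul_le_mul_left h hI.1
        rw [Nat.mul_add, Nat.mul_one] at e3
        have hhI : h * I < a := by rw [hA]; omega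
        refine ⟨⟨hhI, hj, ?_⟩, by trivial, by trivial⟩
        have : ((h * I) / h, j / v) ∉ S ∧ (h * I) % h = 0 := by
          rw [Nat.mul_div_cancel_left _ (by omega : 0 < h)]
          exact ⟨hI.2, Nat.mul_mod_right h _⟩
        exact this
    rw [hset, Finset.card_image_of_injective]
    · have hcomp : ((Finset.range A).filter (fun I => (I, j / v) ∈ S)).card +
          ((Finset.range A).filter (fun I => ¬ (I, j / v) ∈ S)).card = A := by
        rw [Finset.card_filter_add_card_filter_not, Finset.card_range]
      rw [rowS (by omega) hB1 hmB hK (hYlt j hj)] at hcomp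
      omega
    · intro I1 I2 he
      rw [Prod.mk.injEq] at he
      have := he.2
      rw [Prod.mk.injEq] at this
      exact Nat.eq_of_mul_eq_mul_left (by omega : 0 < h) this.1

/-- The rectangle `R_{a×b}` admits a tiling by horizontal bars of length `h` and
vertical bars of length `v` with exactly `m` vertical bars in every column and
exactly `n` horizontal bars in every row, iff `ab = amv + bnh`, `h ∣ a` and `v ∣ b`. -/
theorem stmt_5 (a b h v m n : ℕ) (ha : 1 ≤ a) (hb : 1 ≤ b) (hh : 1 ≤ h)
    (hv : 1 ≤ v) (hm : 1 ≤ m) (hn : 1 ≤ n) :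
    (∃ T : Finset BarP, IsTilingOf h v (rectR a b) T ∧
      (∀ i < a, vertCount T i = m) ∧ (∀ j < b, horizCount T j = n)) ↔
    (a * b = a * m * v + b * n * h ∧ h ∣ a ∧ v ∣ b) := by
  constructor
  · rintro ⟨T, hT, hvc, hhc⟩
    refine ⟨forward_area hh hv hT hvc hhc, ?_, ?_⟩
    · exact dvd_of_tiling ha hb hh hv hm hn hT hvc hhc
    · refine dvd_of_tiling hb ha hv hh hn hm (tiling_swap hT) ?_ ?_
      · intro i hi; rw [vertCount_swap]; exact hhc i hi
      · intro j hj; rw [horizCount_swap]; exact hvc j hj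
  · rintro ⟨harea, hha, hvb⟩
    exact construction ha hb hh hv hm hn harea hha hvb
end

section
/- Given integers p, q, m, n ≥ 1 with pq = pm + qn, there exists a 0-1 matrix of size p × q such that each column contains exactly m ones and each row contains exactly n zeros. -/
lemma aux_count (q k j : ℕ) (hq : 0 < q) (hj : j < q) :
    ((Finset.range (q*k)).filter (fun t => t % q = j)).card = k := by
  have h : ((Finset.range (q*k)).filter (fun t => t % q = j)).card
      = (Finset.range k).card := by
    apply Finset.card_bij' (fun t _ => t / q) (fun s _ => q * s + j)
    case hi =>
      intro t ht
      simp only [Finset.mem_filter, Finset.mem_range] at ht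
      simp only [Finset.mem_range]
      exact Nat.div_lt_of_lt_mul (by omega)
    case hj =>
      intro s hs
      simp only [Finset.mem_range] at hs
      simp only [Finset.mem_filter, Finset.mem_range]
      refine ⟨?_, by simp [Nat.mul_add_mod, Nat.mod_eq_of_lt hj]⟩
      calc q * s + j < q * s + q := by omega
        _ = q * (s + 1) := by ring
        _ ≤ q * k := Nat.mul_le_mul_left q hs
    case left_inv =>
      intro t ht
      simp only [Finset.mem_filter, Finset.mem_range] at ht
      conv_rhs => rw [← Nat.div_add_mod t q]
      rw [ht.2]
    case right_inv =>
      intro s hs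
      rw [Nat.mul_add_div hq, Nat.div_eq_of_lt hj]
      omega
  rw [h, Finset.card_range]

lemma aux_sub_add (q : ℕ) (a b : ℕ) (hb : b ≤ a + q) :
    ((a + q - b) % q + b) % q = a % q := by
  have h : a + q - b + b = a + q := by omega
  rw [Nat.mod_add_mod, h, Nat.add_mod_right]

lemma aux_add_sub (q : ℕ) (a b : ℕ) (hb : b ≤ q) :
    ((a + b) % q + q - b) % q = a % q := by
  have h1 : (a + b) % q + q - b + b = (a + b) % q + q := by omega
  have h2 : (a + b) % q + q - b + b ≡ a + b [MOD q] := by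
    rw [h1]
    calc (a + b) % q + q ≡ (a + b) % q [MOD q] := Nat.add_modEq_right
      _ ≡ a + b [MOD q] := (Nat.mod_modEq _ _)
  exact Nat.ModEq.add_right_cancel' b h2

lemma aux_col (q m r : ℕ) (hq : 0 < q) (hm : m ≤ q) (hr : r < q) :
    (Finset.univ.filter (fun j : Fin q => (j.val + q - r) % q < m)).card = m := by
  have h : (Finset.univ.filter (fun j : Fin q => (j.val + q - r) % q < m)).card
      = (Finset.univ.filter (fun x : Fin q => x.val < m)).card := by
    apply Finset.card_bij' (fun j _ => (⟨(j.val + q - r) % q, Nat.mod_lt _ hq⟩ : Fin q))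
      (fun x _ => (⟨(x.val + r) % q, Nat.mod_lt _ hq⟩ : Fin q))
    · intro j hj
      simp only [Finset.mem_filter, Finset.mem_univ, true_and] at hj ⊢
      exact hj
    · intro x hx
      simp only [Finset.mem_filter, Finset.mem_univ, true_and] at hx ⊢
      have := aux_add_sub q x.val r (le_of_lt hr)
      rw [this, Nat.mod_eq_of_lt x.isLt]
      exact hx
    · intro j hj
      apply Fin.ext
      simp only
      have := aux_sub_add q j.val r (by omega)
      rw [this, Nat.mod_eq_of_lt j.isLt]
    · intro x hx
      apply Fin.ext
      simp only
      have := aux_add_sub q x.val r (le_of_lt hr)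
      rw [this, Nat.mod_eq_of_lt x.isLt]
  rw [h]
  have h2 : (Finset.univ.filter (fun x : Fin q => x.val < m))
      = (Finset.range m).attachFin (fun x hx => by
          simp only [Finset.mem_range] at hx; omega) := by
    ext x
    simp [Finset.mem_attachFin]
  rw [h2, Finset.card_attachFin, Finset.card_range]
lemma aux_row (p q m j : ℕ) (hq : 0 < q) (hm0 : 0 < m) (hm : m ≤ q) (hj : j < q) :
    (Finset.univ.filter (fun i : Fin p => (j + q - (i.val * m) % q) % q < m)).card
      = ((Finset.range (p * m)).filter (fun t => t % q = j)).card := by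
  apply Finset.card_bij'
    (fun i _ => i.val * m + (j + q - (i.val * m) % q) % q)
    (fun t ht => (⟨t / m, by
      simp only [Finset.mem_filter, Finset.mem_range] at ht
      exact Nat.div_lt_of_lt_mul (by rw [Nat.mul_comm]; exact ht.1)⟩ : Fin p))
  case hi =>
    intro i hi
    simp only [Finset.mem_filter, Finset.mem_univ, true_and] at hi ⊢
    constructor
    · rw [Finset.mem_range]
      calc i.val * m + (j + q - (i.val * m) % q) % q < i.val * m + m := by omega
        _ = (i.val + 1) * m := by ring
        _ ≤ p * m := Nat.mul_le_mul_right m i.isLt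
    · have hb : (i.val * m) % q < q := Nat.mod_lt _ hq
      rw [← Nat.mod_add_mod, Nat.add_comm,
        aux_sub_add q j ((i.val * m) % q) (by omega), Nat.mod_eq_of_lt hj]
  case hj =>
    intro t ht
    simp only [Finset.mem_filter, Finset.mem_range] at ht
    simp only [Finset.mem_filter, Finset.mem_univ, true_and]
    -- r = (t/m*m) % q ; s = t % m ; (r+s) % q = j ; show (j+q-r)%q = s < m
    have hr : ((t / m * m) % q) ≤ q := le_of_lt (Nat.mod_lt _ hq)
    have hts : t / m * m + t % m = t := by
      rw [Nat.mul_comm]; exact Nat.div_add_mod t m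
    have hkey : (j + q - (t / m * m) % q) % q = t % m := by
      have h1 : ((t / m * m) % q + t % m) % q = j := by
        rw [Nat.mod_add_mod, hts]; exact ht.2
      rw [← h1, Nat.add_comm ((t / m * m) % q) (t % m)]
      rw [aux_add_sub q (t % m) ((t / m * m) % q) hr]
      exact Nat.mod_eq_of_lt (lt_of_lt_of_le (Nat.mod_lt t hm0) hm)
    rw [hkey]
    exact Nat.mod_lt t hm0
  case left_inv =>
    intro i hi
    apply Fin.ext
    simp only
    simp only [Finset.mem_filter, Finset.mem_univ, true_and] at hi
    rw [Nat.add_comm, Nat.add_mul_div_right _ _ hm0, Nat.div_eq_of_lt hi]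
    omega
  case right_inv =>
    intro t ht
    simp only
    simp only [Finset.mem_filter, Finset.mem_range] at ht
    have hr : ((t / m * m) % q) ≤ q := le_of_lt (Nat.mod_lt _ hq)
    have hts : t / m * m + t % m = t := by
      rw [Nat.mul_comm]; exact Nat.div_add_mod t m
    have hkey : (j + q - (t / m * m) % q) % q = t % m := by
      have h1 : ((t / m * m) % q + t % m) % q = j := by
        rw [Nat.mod_add_mod, hts]; exact ht.2
      rw [← h1, Nat.add_comm ((t / m * m) % q) (t % m)]
      rw [aux_add_sub q (t % m) ((t / m * m) % q) hr]
      exact Nat.mod_eq_of_lt (lt_of_lt_of_le (Nat.mod_lt t hm0) hm)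
    rw [hkey, hts]

/-- Given `p,q,m,n ≥ 1` with `pq = pm + qn`, there is a 0-1 matrix of size `p × q`
(`p` columns, `q` rows) in which every column has exactly `m` ones and every row has
exactly `n` zeros. -/
theorem stmt_7 (p q m n : ℕ) (hp : 1 ≤ p) (hq : 1 ≤ q) (hm : 1 ≤ m) (hn : 1 ≤ n)
    (heq : p * q = p * m + q * n) :
    ∃ M : Fin p → Fin q → Bool,
      (∀ i : Fin p, (Finset.univ.filter (fun j : Fin q => M i j = true)).card = m) ∧
      (∀ j : Fin q, (Finset.univ.filter (fun i : Fin p => M i j = false)).card = n) := by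
  have hq0 : 0 < q := hq
  have hqn : q ≤ q * n := Nat.le_mul_of_pos_right q hn
  have hmlt : m < q := by
    have h1 : p * m < p * q := by omega
    exact Nat.lt_of_mul_lt_mul_left h1
  have hnp : n ≤ p := by
    have h1 : q * n ≤ q * p := by
      have : q * p = p * q := Nat.mul_comm q p
      omega
    exact Nat.le_of_mul_le_mul_left h1 hq0
  set k := p - n with hk_def
  have hk : p * m = q * k := by
    have e1 : q * k + q * n = q * p := by
      rw [← Nat.mul_add]; congr 1; omega
    have e2 : q * p = p * q := Nat.mul_comm q p
    omega
  refine ⟨fun i j => decide ((j.val + q - (i.val * m) % q) % q < m), ?_, ?_⟩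
  · intro i
    simp only [decide_eq_true_eq]
    exact aux_col q m ((i.val * m) % q) hq0 (le_of_lt hmlt) (Nat.mod_lt _ hq0)
  · intro j
    have htrue : (Finset.univ.filter
        (fun i : Fin p => decide ((j.val + q - (i.val * m) % q) % q < m) = true)).card = k := by
      simp only [decide_eq_true_eq]
      rw [aux_row p q m j.val hq0 hm (le_of_lt hmlt) j.isLt, hk]
      exact aux_count q k j.val hq0 j.isLt
    have hsplit := Finset.card_filter_add_card_filter_not
      (s := (Finset.univ : Finset (Fin p)))
      (p := fun i : Fin p => decide ((j.val + q - (i.val * m) % q) % q < m) = true)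
    have hset : (Finset.univ.filter
        (fun i : Fin p => decide ((j.val + q - (i.val * m) % q) % q < m) = false))
        = (Finset.univ.filter
        (fun i : Fin p => ¬ (decide ((j.val + q - (i.val * m) % q) % q < m) = true))) := by
      ext i
      simp
    rw [hset]
    rw [Finset.card_univ, Fintype.card_fin] at hsplit
    omega
end

section
/- Given integers p, q, m, n ≥ 1, a 0-1 matrix of size p × q in which each column contains exactly m ones and each row contains exactly n zeros exists if and only if pq = pm + qn. -/
private lemma mod_cancel1 (q r t : ℕ) (hr : r < q) (ht : t < q) :
    ((r + t) % q + q - r) % q = t := by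
  rcases Nat.lt_or_ge (r + t) q with h | h
  · rw [Nat.mod_eq_of_lt h]
    have e : r + t + q - r = t + q := by omega
    rw [e, Nat.add_mod_right, Nat.mod_eq_of_lt ht]
  · have h2 : r + t - q < q := by omega
    rw [Nat.mod_eq_sub_mod h, Nat.mod_eq_of_lt h2]
    have e : r + t - q + q - r = t := by omega
    rw [e, Nat.mod_eq_of_lt ht]

private lemma mod_cancel2 (q r a : ℕ) (hr : r < q) (ha : a < q) :
    ((a + q - r) % q + r) % q = a := by
  rcases Nat.lt_or_ge a r with h | h
  · have h1 : a + q - r < q := by omega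
    rw [Nat.mod_eq_of_lt h1]
    have e : a + q - r + r = a + q := by omega
    rw [e, Nat.add_mod_right, Nat.mod_eq_of_lt ha]
  · have h1 : a + q - r ≥ q := by omega
    have h2 : a + q - r - q < q := by omega
    rw [Nat.mod_eq_sub_mod h1, Nat.mod_eq_of_lt h2]
    have e : a + q - r - q + r = a := by omega
    rw [e, Nat.mod_eq_of_lt ha]

private lemma mod_shift (q a t : ℕ) (ht : t < q) :
    (a + t) % q = (a % q + t) % q := by
  rw [Nat.add_mod, Nat.mod_eq_of_lt ht]

/-- if `(i*m + t) % q = j` with `t < m ≤ q` then `(j + q - (i*m)%q) % q = t`. -/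
private lemma aux_rec (q m j i t : ℕ) (hq : 0 < q) (hmq : m ≤ q) (ht : t < m)
    (hj : (i * m + t) % q = j) : (j + q - (i * m) % q) % q = t := by
  have hrq : (i * m) % q < q := Nat.mod_lt _ hq
  rw [mod_shift q (i * m) t (lt_of_lt_of_le ht hmq)] at hj
  rw [← hj]
  exact mod_cancel1 q ((i * m) % q) t hrq (lt_of_lt_of_le ht hmq)

private lemma card_residues (q r j : ℕ) (hq : 0 < q) (hj : j < q) :
    ((Finset.range (q * r)).filter (fun k => k % q = j)).card = r := by
  have h : ((Finset.range (q * r)).filter (fun k => k % q = j)).card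
      = (Finset.range r).card := by
    apply Finset.card_nbij' (fun k => k / q) (fun s => j + q * s)
    · intro k hk
      simp only [Finset.mem_coe, Finset.mem_filter, Finset.mem_range] at hk ⊢
      by_contra hcon
      push_neg at hcon
      have : q * r ≤ q * (k / q) := Nat.mul_le_mul_left q hcon
      have hd := Nat.div_add_mod k q
      omega
    · intro s hs
      simp only [Finset.mem_coe, Finset.mem_range] at hs
      simp only [Finset.mem_coe, Finset.mem_filter, Finset.mem_range]
      constructor
      · have : q * s + q ≤ q * r := by
          calc q * s + q = q * (s + 1) := by ring
          _ ≤ q * r := Nat.mul_le_mul_left q (by omega)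
        omega
      · simp [Nat.add_mul_mod_self_left, Nat.mod_eq_of_lt hj]
    · intro k hk
      simp only [Finset.mem_coe, Finset.mem_filter, Finset.mem_range] at hk
      have hd := Nat.div_add_mod k q
      beta_reduce
      omega
    · intro s hs
      simp only [Finset.mem_coe, Finset.mem_range] at hs
      beta_reduce
      rw [Nat.add_mul_div_left _ _ hq, Nat.div_eq_of_lt hj]
      omega
  rw [h, Finset.card_range]

/-- Given `p,q,m,n ≥ 1`, a 0-1 matrix of size `p × q` (`p` columns, `q` rows) in which
every column has exactly `m` ones and every row has exactly `n` zeros exists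
if and only if `pq = pm + qn`. -/
theorem stmt_8 (p q m n : ℕ) (hp : 1 ≤ p) (hq : 1 ≤ q) (hm : 1 ≤ m) (hn : 1 ≤ n) :
    (∃ M : Fin p → Fin q → Bool,
      (∀ i : Fin p, (Finset.univ.filter (fun j : Fin q => M i j = true)).card = m) ∧
      (∀ j : Fin q, (Finset.univ.filter (fun i : Fin p => M i j = false)).card = n))
    ↔ p * q = p * m + q * n := by
  have hq0 : 0 < q := hq
  have hm0 : 0 < m := hm
  constructor
  · rintro ⟨M, hcol, hrow⟩
    have hnp : n ≤ p := by
      have := Finset.card_filter_le Finset.univ (fun i : Fin p => M i ⟨0, hq0⟩ = false)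
      rw [hrow ⟨0, hq0⟩] at this
      simpa using this
    have hrowT : ∀ j : Fin q,
        (Finset.univ.filter (fun i : Fin p => M i j = true)).card = p - n := by
      intro j
      have hsplit := Finset.card_filter_add_card_filter_not
        (s := (Finset.univ : Finset (Fin p))) (p := fun i => M i j = true)
      simp only [Bool.not_eq_true, Finset.card_univ, Fintype.card_fin] at hsplit
      have := hrow j
      omega
    have key : p * m = q * (p - n) := by
      have h1 : ∑ i : Fin p, ∑ j : Fin q, (if M i j = true then 1 else 0) = p * m := by
        rw [Finset.sum_congr rfl (fun i _ => by rw [← Finset.card_filter, hcol i])]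
        simp [Finset.sum_const, mul_comm]
      have h2 : ∑ j : Fin q, ∑ i : Fin p, (if M i j = true then 1 else 0) = q * (p - n) := by
        rw [Finset.sum_congr rfl (fun j _ => by rw [← Finset.card_filter, hrowT j])]
        simp [Finset.sum_const, mul_comm]
      rw [← h1, ← h2, Finset.sum_comm]
    have expand : q * p = q * n + q * (p - n) := by
      rw [← Nat.mul_add]; congr 1; omega
    have hc : p * q = q * p := Nat.mul_comm p q
    omega
  · intro heq
    have hmq : m < q := by
      by_contra hcon
      push_neg at hcon
      have h1 : p * q ≤ p * m := Nat.mul_le_mul_left p hcon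
      have h2 : q * 1 ≤ q * n := Nat.mul_le_mul_left q hn
      omega
    have hnp : n < p := by
      by_contra hcon
      push_neg at hcon
      have h1 : q * p ≤ q * n := Nat.mul_le_mul_left q hcon
      have h2 : p * 1 ≤ p * m := Nat.mul_le_mul_left p hm
      have hc : q * p = p * q := Nat.mul_comm q p
      omega
    have key : p * m = q * (p - n) := by
      have expand : q * p = q * n + q * (p - n) := by
        rw [← Nat.mul_add]; congr 1; omega
      have hc : p * q = q * p := Nat.mul_comm p q
      omega
    refine ⟨fun i j => decide ((j.val + q - (i.val * m) % q) % q < m), ?_, ?_⟩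
    · -- columns: m trues
      intro i
      show (Finset.univ.filter
        (fun j : Fin q => decide ((j.val + q - (i.val * m) % q) % q < m) = true)).card = m
      set r := (i.val * m) % q with hr
      have hrq : r < q := Nat.mod_lt _ hq0
      have h : (Finset.univ.filter
          (fun j : Fin q => decide ((j.val + q - r) % q < m) = true)).card
          = (Finset.range m).card := by
        apply Finset.card_nbij' (fun j : Fin q => (j.val + q - r) % q)
          (fun t => (⟨(r + t) % q, Nat.mod_lt _ hq0⟩ : Fin q))
        · intro j hj
          simp only [Finset.mem_coe, Finset.mem_filter, decide_eq_true_eq] at hj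
          simpa using hj.2
        · intro t ht
          simp only [Finset.mem_coe, Finset.mem_range] at ht
          simp only [Finset.mem_coe, Finset.mem_filter, Finset.mem_univ, true_and, decide_eq_true_eq]
          rw [mod_cancel1 q r t hrq (by omega)]
          exact ht
        · intro j hj
          have : ((r + ((j.val + q - r) % q)) % q) = j.val := by
            rw [Nat.add_comm]
            exact mod_cancel2 q r j.val hrq j.isLt
          exact Fin.ext this
        · intro t ht
          simp only [Finset.mem_coe, Finset.mem_range] at ht
          exact mod_cancel1 q r t hrq (by omega)
      rw [h, Finset.card_range]
    · -- rows: n falses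
      intro j
      show (Finset.univ.filter
        (fun i : Fin p => decide ((j.val + q - (i.val * m) % q) % q < m) = false)).card = n
      have hsplit := Finset.card_filter_add_card_filter_not
        (s := (Finset.univ : Finset (Fin p)))
        (p := fun i => decide ((j.val + q - (i.val * m) % q) % q < m) = false)
      simp only [Bool.not_eq_false, Finset.card_univ, Fintype.card_fin] at hsplit
      have hT : (Finset.univ.filter
          (fun i : Fin p => decide ((j.val + q - (i.val * m) % q) % q < m) = true)).card
          = p - n := by
        have h : (Finset.univ.filter
            (fun i : Fin p => decide ((j.val + q - (i.val * m) % q) % q < m) = true)).card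
            = ((Finset.range (q * (p - n))).filter (fun k => k % q = j.val)).card := by
          rw [← key]
          refine Finset.card_bij'
            (fun (i : Fin p) (_ : i ∈ _) =>
              i.val * m + (j.val + q - (i.val * m) % q) % q)
            (fun k hk =>
              (⟨k / m, by
                simp only [Finset.mem_filter, Finset.mem_range] at hk
                exact (Nat.div_lt_iff_lt_mul hm0).mpr hk.1⟩ : Fin p))
            ?_ ?_ ?_ ?_
          · intro i hi
            simp only [Finset.mem_filter, Finset.mem_univ, true_and,
              decide_eq_true_eq] at hi
            set t := (j.val + q - (i.val * m) % q) % q with htdef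
            have hrq : (i.val * m) % q < q := Nat.mod_lt _ hq0
            simp only [Finset.mem_filter, Finset.mem_range]
            constructor
            · have h2 : i.val * m + m = (i.val + 1) * m := by ring
              have h3 : (i.val + 1) * m ≤ p * m := Nat.mul_le_mul_right m i.isLt
              omega
            · rw [mod_shift q (i.val * m) t (lt_of_lt_of_le hi hmq.le), htdef,
                Nat.add_comm ((i.val * m) % q)]
              exact mod_cancel2 q ((i.val * m) % q) j.val hrq j.isLt
          · intro k hk
            simp only [Finset.mem_filter, Finset.mem_range] at hk
            simp only [Finset.mem_filter, Finset.mem_univ, true_and, decide_eq_true_eq]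
            have hd := Nat.div_add_mod k m
            have hkm : k % m < m := Nat.mod_lt _ hm0
            have hres : (k / m * m + k % m) % q = j.val := by
              rw [Nat.mul_comm, hd]; exact hk.2
            rw [aux_rec q m j.val (k / m) (k % m) hq0 hmq.le hkm hres]
            exact hkm
          · intro i hi
            simp only [Finset.mem_filter, Finset.mem_univ, true_and,
              decide_eq_true_eq] at hi
            set t := (j.val + q - (i.val * m) % q) % q with htdef
            apply Fin.ext
            show (i.val * m + t) / m = i.val
            rw [Nat.add_comm, Nat.add_mul_div_right _ _ hm0, Nat.div_eq_of_lt hi]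
            omega
          · intro k hk
            simp only [Finset.mem_filter, Finset.mem_range] at hk
            show k / m * m + (j.val + q - (k / m * m) % q) % q = k
            have hd := Nat.div_add_mod k m
            have hkm : k % m < m := Nat.mod_lt _ hm0
            have hres : (k / m * m + k % m) % q = j.val := by
              rw [Nat.mul_comm, hd]; exact hk.2
            rw [aux_rec q m j.val (k / m) (k % m) hq0 hmq.le hkm hres]
            have hc : k / m * m = m * (k / m) := Nat.mul_comm _ _
            omega
        rw [h, card_residues q (p - n) j.val hq0 j.isLt]
      omega
end

section
/- Let a tiling of the rectangle R_{a×b} by horizontal bars of length h and vertical bars of length v be given, with m_i vertical bars in column i. Define c_i to be the number of horizontal bars whose leftmost cell is in column i (and set c_i = 0 for i < 0). Then for all 0 ≤ i < a: c_i = b − (v·m_i + c_{i−h+1} + c_{i−h+2} + ... + c_{i−1}). -/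
lemma barCells_true (h v x y : ℕ) :
    barCells h v (true, x, y) = (Finset.range v).image (fun s => (x, y + s)) := rfl

lemma barCells_false (h v x y : ℕ) :
    barCells h v (false, x, y) = (Finset.range h).image (fun s => (x + s, y)) := rfl

/-- Let `T` be a tiling of `R_{a×b}` by horizontal bars of length `h` and vertical
bars of length `v`, with `m i` vertical bars in column `i`.  Let `c z` be the number
of horizontal bars whose leftmost cell is in column `z` (and `c z = 0` for `z < 0`).
Then for all `0 ≤ i < a` we have `c i = b - (v·m i + c (i-h+1) + … + c (i-1))`. -/
theorem stmt_13 (a b h v : ℕ) (ha : 1 ≤ a) (hb : 1 ≤ b) (hh : 1 ≤ h) (hv : 1 ≤ v)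
    (m : ℕ → ℕ) (T : Finset BarP) (hT : IsTilingOf h v (rectR a b) T)
    (hm : ∀ i < a, vertCount T i = m i)
    (c : ℤ → ℤ)
    (hcneg : ∀ z : ℤ, z < 0 → c z = 0)
    (hcdef : ∀ i : ℕ, c (i : ℤ) = horizStartCount T i) :
    ∀ i : ℕ, i < a →
      c (i : ℤ) = (b : ℤ) - ((v : ℤ) * (m i : ℤ) +
        ∑ k ∈ Finset.Ico 1 h, c ((i : ℤ) - (k : ℤ))) := by
  intro i hi
  classical
  obtain ⟨hsub, huniq⟩ := hT
  set Col : Finset (ℕ × ℕ) := {i} ×ˢ Finset.range b with hColdef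
  have hmemCol : ∀ p : ℕ × ℕ, p ∈ Col ↔ p.1 = i ∧ p.2 < b := by
    intro p
    simp only [hColdef, Finset.mem_product, Finset.mem_singleton, Finset.mem_range]
  have hColsub : Col ⊆ rectR a b := by
    intro p hp
    rw [hmemCol] at hp
    simp only [rectR, Finset.mem_product, Finset.mem_range]
    exact ⟨hp.1 ▸ hi, hp.2⟩
  have hcover : Col = T.biUnion (fun t => Col ∩ barCells h v t) := by
    apply Finset.Subset.antisymm
    · intro p hp
      obtain ⟨t, ⟨htT, hpt⟩, _⟩ := huniq p (hColsub hp)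
      exact Finset.mem_biUnion.mpr ⟨t, htT, Finset.mem_inter.mpr ⟨hp, hpt⟩⟩
    · intro p hp
      obtain ⟨t, _, hpt⟩ := Finset.mem_biUnion.mp hp
      exact (Finset.mem_inter.mp hpt).1
  have hcardCol : Col.card = b := by simp [hColdef]
  have hcard : b = ∑ t ∈ T, (Col ∩ barCells h v t).card := by
    rw [← hcardCol]
    conv_lhs => rw [hcover]
    apply Finset.card_biUnion
    intro t1 h1 t2 h2 hne
    apply Finset.disjoint_left.mpr
    intro p hp1 hp2
    have hpC := (Finset.mem_inter.mp hp1).1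
    obtain ⟨t, _, hun⟩ := huniq p (hColsub hpC)
    exact hne ((hun t1 ⟨h1, (Finset.mem_inter.mp hp1).2⟩).trans
      (hun t2 ⟨h2, (Finset.mem_inter.mp hp2).2⟩).symm)
  have hQP : ∀ t : BarP, (t.1 = false ∧ t.2.1 ≤ i ∧ i < t.2.1 + h) →
      ¬(t.1 = true ∧ t.2.1 = i) := by
    rintro t ⟨hf, _⟩ ⟨ht, _⟩; rw [hf] at ht; exact Bool.false_ne_true ht
  have hterm : ∀ t ∈ T, (Col ∩ barCells h v t).card =
      (if t.1 = true ∧ t.2.1 = i then v else 0) +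
      (if t.1 = false ∧ t.2.1 ≤ i ∧ i < t.2.1 + h then 1 else 0) := by
    rintro ⟨bl, x, y⟩ htT
    cases bl with
    | true =>
      rw [if_neg (show ¬(((true, x, y) : BarP).1 = false ∧ ((true, x, y) : BarP).2.1 ≤ i ∧
        i < ((true, x, y) : BarP).2.1 + h) by simp), add_zero]
      by_cases hx : x = i
      · subst hx
        rw [if_pos ⟨rfl, rfl⟩]
        have hBsub : barCells h v (true, x, y) ⊆ Col := by
          intro p hp
          have hpR := hsub _ htT hp
          simp only [barCells_true, barCells_false, Finset.mem_image, Finset.mem_range] at hp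
          obtain ⟨s, hs, rfl⟩ := hp
          rw [hmemCol]
          refine ⟨rfl, ?_⟩
          simp only [rectR, Finset.mem_product, Finset.mem_range] at hpR
          exact hpR.2
        rw [Finset.inter_eq_right.mpr hBsub]
        simp only [barCells_true, barCells_false]
        rw [Finset.card_image_of_injective _ (fun s1 s2 hs => by
          simpa using hs : Function.Injective (fun s => (x, y + s)))]
        exact Finset.card_range v
      · rw [if_neg (by simp [hx])]
        rw [Finset.card_eq_zero, Finset.eq_empty_iff_forall_notMem]
        intro p hp
        obtain ⟨hpC, hpB⟩ := Finset.mem_inter.mp hp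
        simp only [barCells_true, barCells_false, Finset.mem_image, Finset.mem_range] at hpB
        obtain ⟨s, _, rfl⟩ := hpB
        exact hx ((hmemCol _).mp hpC).1
    | false =>
      rw [if_neg (show ¬(((false, x, y) : BarP).1 = true ∧ ((false, x, y) : BarP).2.1 = i)
        by simp), zero_add]
      have hyb : y < b := by
        have h1 : (x, y) ∈ barCells h v (false, x, y) := by
          simp only [barCells_true, barCells_false,
            Finset.mem_image, Finset.mem_range]
          exact ⟨0, hh, by simp⟩
        have h2 := hsub _ htT h1
        simp only [rectR, Finset.mem_product, Finset.mem_range] at h2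
        exact h2.2
      by_cases hcond : x ≤ i ∧ i < x + h
      · rw [if_pos ⟨rfl, hcond⟩]
        have heq : Col ∩ barCells h v (false, x, y) = {(i, y)} := by
          ext p
          simp only [Finset.mem_inter, Finset.mem_singleton, hmemCol,
            barCells_true, barCells_false, Finset.mem_image, Finset.mem_range]
          constructor
          · rintro ⟨⟨hp1, hp2⟩, s, hs, rfl⟩
            simp only at hp1 ⊢
            rw [Prod.ext_iff]
            exact ⟨hp1, rfl⟩
          · rintro rfl
            refine ⟨⟨by trivial, hyb⟩, i - x, by omega, ?_⟩
            simp only [Prod.mk.injEq]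
            exact ⟨by omega, by trivial⟩
        rw [heq, Finset.card_singleton]
      · rw [if_neg (by simpa using hcond)]
        rw [Finset.card_eq_zero, Finset.eq_empty_iff_forall_notMem]
        intro p hp
        obtain ⟨hpC, hpB⟩ := Finset.mem_inter.mp hp
        simp only [barCells_true, barCells_false,
          Finset.mem_image, Finset.mem_range] at hpB
        obtain ⟨s, hs, rfl⟩ := hpB
        have hfst : x + s = i := ((hmemCol _).mp hpC).1
        exact hcond ⟨by omega, by omega⟩
  have hsum : ∑ t ∈ T, (Col ∩ barCells h v t).card
      = v * vertCount T i +
        (T.filter (fun t => t.1 = false ∧ t.2.1 ≤ i ∧ i < t.2.1 + h)).card := by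
    rw [Finset.sum_congr rfl hterm, Finset.sum_add_distrib]
    congr 1
    · rw [← Finset.sum_filter, Finset.sum_const, smul_eq_mul, mul_comm]
      rfl
    · rw [Finset.card_filter]
  have hhoriz : (T.filter (fun t => t.1 = false ∧ t.2.1 ≤ i ∧ i < t.2.1 + h)).card
      = ∑ k ∈ Finset.range h, (if k ≤ i then horizStartCount T (i - k) else 0) := by
    have hb2 : T.filter (fun t => t.1 = false ∧ t.2.1 ≤ i ∧ i < t.2.1 + h)
        = (Finset.range h).biUnion
            (fun k => T.filter (fun t => t.1 = false ∧ t.2.1 + k = i)) := by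
      ext t
      simp only [Finset.mem_filter, Finset.mem_biUnion, Finset.mem_range]
      constructor
      · rintro ⟨htT, hf, hle, hlt⟩
        exact ⟨i - t.2.1, by omega, htT, hf, by omega⟩
      · rintro ⟨k, hk, htT, hf, hke⟩
        exact ⟨htT, hf, by omega, by omega⟩
    rw [hb2, Finset.card_biUnion]
    · apply Finset.sum_congr rfl
      intro k _
      by_cases hki : k ≤ i
      · rw [if_pos hki]
        unfold horizStartCount
        congr 1
        apply Finset.filter_congr
        intro t _
        constructor
        · rintro ⟨hf, he⟩; exact ⟨hf, by omega⟩
        · rintro ⟨hf, he⟩; exact ⟨hf, by omega⟩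
      · rw [if_neg hki, Finset.card_eq_zero, Finset.filter_eq_empty_iff]
        rintro t _ ⟨hf, he⟩
        omega
    · intro k1 h1 k2 h2 hne
      apply Finset.disjoint_left.mpr
      intro t ht1 ht2
      simp only [Finset.mem_filter] at ht1 ht2
      have e1 := ht1.2.2
      have e2 := ht2.2.2
      exact hne (by omega)
  have key : b = v * m i + ∑ k ∈ Finset.range h,
      (if k ≤ i then horizStartCount T (i - k) else 0) := by
    rw [← hm i hi, ← hhoriz, ← hsum]
    exact hcard
  have hcsum : ∀ k : ℕ, c ((i:ℤ) - k) =
      ((if k ≤ i then horizStartCount T (i - k) else 0 : ℕ) : ℤ) := by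
    intro k
    by_cases hki : k ≤ i
    · rw [if_pos hki]
      have hcast : (i:ℤ) - k = ((i - k : ℕ) : ℤ) := by omega
      rw [hcast, hcdef]
    · rw [if_neg hki, hcneg _ (by omega), Nat.cast_zero]
  have hbz : (b:ℤ) = (v:ℤ) * (m i) + ∑ k ∈ Finset.range h, c ((i:ℤ) - k) := by
    rw [key]
    push_cast
    congr 1
    apply Finset.sum_congr rfl
    intro k _
    rw [hcsum k]
    push_cast
    rfl
  have hsplit : ∑ k ∈ Finset.range h, c ((i:ℤ) - k)
      = c (i:ℤ) + ∑ k ∈ Finset.Ico 1 h, c ((i:ℤ) - k) := by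
    rw [Finset.range_eq_Ico, Finset.sum_eq_sum_Ico_succ_bot hh]
    simp
  rw [hsplit] at hbz
  linarith
end

section
/- For tilings of the rectangle R_{a×b} by horizontal bars of length h and vertical bars of length v with prescribed column projections (m_0,...,m_{a−1}), the property of being 'separated between column i and column i+1' (no horizontal bar covers cells in both column i and column i+1) depends only on the projection vector and not on the particular tiling: if one tiling with these column projections is separated between columns i and i+1, then every tiling with the same column projections is. -/
/-- A tiling is separated between column `i` and column `i+1` if no horizontal bar
covers cells in both columns. -/
def SeparatedAt (h v : ℕ) (T : Finset BarP) (i : ℕ) : Prop :=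
  ¬ ∃ t ∈ T, t.1 = false ∧
      (∃ j, (i, j) ∈ barCells h v t) ∧ (∃ j, (i + 1, j) ∈ barCells h v t)

lemma horiz_mem {h v x y : ℕ} {t : BarP} (ht : t.1 = false) :
    (x, y) ∈ barCells h v t ↔ y = t.2.2 ∧ t.2.1 ≤ x ∧ x < t.2.1 + h := by
  simp only [barCells, ht, Bool.false_eq_true, if_false, Finset.mem_image,
    Finset.mem_range, Prod.mk.injEq]
  constructor
  · rintro ⟨s, hs, h1, h2⟩; omega
  · rintro ⟨rfl, h1, h2⟩; exact ⟨x - t.2.1, by omega, by omega, rfl⟩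

lemma vert_mem {h v x y : ℕ} {t : BarP} (ht : t.1 = true) :
    (x, y) ∈ barCells h v t ↔ x = t.2.1 ∧ t.2.2 ≤ y ∧ y < t.2.2 + v := by
  simp only [barCells, ht, if_true, Finset.mem_image, Finset.mem_range, Prod.mk.injEq]
  constructor
  · rintro ⟨s, hs, h1, h2⟩; omega
  · rintro ⟨rfl, h1, h2⟩; exact ⟨y - t.2.2, by omega, rfl, by omega⟩

def Hcount (h : ℕ) (T : Finset BarP) (i : ℕ) : ℕ :=
  (T.filter (fun t => t.1 = false ∧ t.2.1 ≤ i ∧ i < t.2.1 + h)).card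

def Ccount (h : ℕ) (T : Finset BarP) (i : ℕ) : ℕ :=
  (T.filter (fun t => t.1 = false ∧ t.2.1 ≤ i ∧ i + 1 < t.2.1 + h)).card

lemma lemA {a b h v : ℕ} {T : Finset BarP} (hT : IsTilingOf h v (rectR a b) T)
    (i : ℕ) (hi : i < a) : v * vertCount T i + Hcount h T i = b := by
  classical
  have hcolR : ({i} ×ˢ Finset.range b : Finset (ℕ × ℕ)) ⊆ rectR a b := by
    intro c hc
    simp only [Finset.mem_product, Finset.mem_singleton, Finset.mem_range] at hc
    simp only [rectR, Finset.mem_product, Finset.mem_range]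
    exact ⟨hc.1 ▸ hi, hc.2⟩
  have hcard : ({i} ×ˢ Finset.range b : Finset (ℕ × ℕ)).card = b := by simp
  have hcover : ({i} ×ˢ Finset.range b : Finset (ℕ × ℕ)) =
      T.biUnion (fun t => barCells h v t ∩ ({i} ×ˢ Finset.range b)) := by
    ext c
    simp only [Finset.mem_biUnion, Finset.mem_inter]
    constructor
    · intro hc
      obtain ⟨t, ⟨htT, htc⟩, -⟩ := hT.2 c (hcolR hc)
      exact ⟨t, htT, htc, hc⟩
    · rintro ⟨t, -, -, hc⟩; exact hc
  have hdisj : ∀ t₁ ∈ T, ∀ t₂ ∈ T, t₁ ≠ t₂ →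
      Disjoint (barCells h v t₁ ∩ ({i} ×ˢ Finset.range b))
        (barCells h v t₂ ∩ ({i} ×ˢ Finset.range b)) := by
    intro t₁ h₁ t₂ h₂ hne
    rw [Finset.disjoint_left]
    intro c hc1 hc2
    rw [Finset.mem_inter] at hc1 hc2
    obtain ⟨t, -, huniq⟩ := hT.2 c (hcolR hc1.2)
    exact hne ((huniq t₁ ⟨h₁, hc1.1⟩).trans (huniq t₂ ⟨h₂, hc2.1⟩).symm)
  have hsum : b = ∑ t ∈ T, (barCells h v t ∩ ({i} ×ˢ Finset.range b)).card := by
    have h1 := Finset.card_biUnion hdisj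
    rw [← hcover] at h1
    rw [← h1, hcard]
  have hval : ∀ t ∈ T, (barCells h v t ∩ ({i} ×ˢ Finset.range b)).card =
      (if t.1 = true ∧ t.2.1 = i then v else 0) +
      (if t.1 = false ∧ t.2.1 ≤ i ∧ i < t.2.1 + h then 1 else 0) := by
    intro t htT
    have hsub := hT.1 t htT
    rcases Bool.eq_false_or_eq_true t.1 with ht | ht
    · -- t is vertical
      simp only [ht, true_and, Bool.true_eq_false, false_and, if_false, add_zero]
      by_cases hc : t.2.1 = i
      · rw [if_pos hc]
        have hbc : barCells h v t ⊆ ({i} ×ˢ Finset.range b) := by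
          intro c hcm
          obtain ⟨x, y⟩ := c
          rw [vert_mem ht] at hcm
          have := hsub (by rw [vert_mem ht]; exact hcm)
          simp only [rectR, Finset.mem_product, Finset.mem_range] at this
          simp only [Finset.mem_product, Finset.mem_singleton, Finset.mem_range]
          exact ⟨hcm.1.trans hc, this.2⟩
        rw [Finset.inter_eq_left.mpr hbc]
        simp only [barCells, ht, if_true]
        rw [Finset.card_image_of_injective _ (fun s₁ s₂ hs => by simpa using hs),
          Finset.card_range]
      · rw [if_neg hc]
        have : barCells h v t ∩ ({i} ×ˢ Finset.range b) = ∅ := by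
          rw [Finset.eq_empty_iff_forall_notMem]
          rintro ⟨x, y⟩ hc'
          rw [Finset.mem_inter, vert_mem ht, Finset.mem_product] at hc'
          simp only [Finset.mem_singleton, Finset.mem_range] at hc'
          obtain ⟨⟨h1, -⟩, h2, -⟩ := hc'
          exact hc (by omega)
        rw [this, Finset.card_empty]
    · -- t is horizontal
      simp only [ht, Bool.false_eq_true, false_and, if_false, true_and, zero_add]
      by_cases hc : t.2.1 ≤ i ∧ i < t.2.1 + h
      · rw [if_pos hc]
        have : barCells h v t ∩ ({i} ×ˢ Finset.range b) = {(i, t.2.2)} := by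
          ext c
          obtain ⟨x, y⟩ := c
          simp only [Finset.mem_inter, horiz_mem ht, Finset.mem_product,
            Finset.mem_singleton, Finset.mem_range, Prod.mk.injEq]
          constructor
          · rintro ⟨⟨rfl, -⟩, rfl, -⟩; exact ⟨rfl, rfl⟩
          · rintro ⟨hx, hy⟩
            have hmem : (x, y) ∈ barCells h v t := by
              rw [horiz_mem ht]; exact ⟨hy, by omega⟩
            have := hsub hmem
            simp only [rectR, Finset.mem_product, Finset.mem_range] at this
            exact ⟨⟨hy, by omega⟩, hx, this.2⟩
        rw [this, Finset.card_singleton]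
      · rw [if_neg hc]
        have : barCells h v t ∩ ({i} ×ˢ Finset.range b) = ∅ := by
          rw [Finset.eq_empty_iff_forall_notMem]
          rintro ⟨x, y⟩ hc'
          rw [Finset.mem_inter, horiz_mem ht, Finset.mem_product] at hc'
          simp only [Finset.mem_singleton, Finset.mem_range] at hc'
          obtain ⟨⟨-, h1, h2⟩, h3, -⟩ := hc'
          exact hc ⟨by omega, by omega⟩
        rw [this, Finset.card_empty]
  rw [Finset.sum_congr rfl hval, Finset.sum_add_distrib, ← Finset.sum_filter,
    ← Finset.sum_filter, Finset.sum_const, Finset.sum_const, smul_eq_mul,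
    smul_eq_mul, mul_one] at hsum
  rw [vertCount, Hcount, hsum, mul_comm]

lemma lemB {h : ℕ} (T : Finset BarP) (i : ℕ) :
    Hcount h T i = ∑ s ∈ Finset.range (i + 1),
      if i < s + h then horizStartCount T s else 0 := by
  classical
  rw [Hcount, Finset.card_eq_sum_card_fiberwise
    (f := fun t : BarP => t.2.1) (t := Finset.range (i + 1))
    (fun t ht => by
      rw [Finset.mem_coe, Finset.mem_filter] at ht
      show t.2.1 ∈ Finset.range (i + 1)
      rw [Finset.mem_range]
      omega)]
  refine Finset.sum_congr rfl fun s hs => ?_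
  rw [Finset.mem_range] at hs
  by_cases hsh : i < s + h
  · rw [if_pos hsh, horizStartCount]
    congr 1
    ext t
    simp only [Finset.mem_filter]
    constructor
    · rintro ⟨⟨hT', h1, -⟩, h2⟩; exact ⟨hT', h1, h2⟩
    · rintro ⟨hT', h1, h2⟩; exact ⟨⟨hT', h1, by omega⟩, h2⟩
  · rw [if_neg hsh, Finset.card_eq_zero, Finset.filter_eq_empty_iff]
    intro t ht
    rw [Finset.mem_filter] at ht
    show ¬ t.2.1 = s
    omega

lemma lemC {h : ℕ} (T : Finset BarP) (i : ℕ) :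
    Ccount h T i = ∑ s ∈ Finset.range (i + 1),
      if i + 1 < s + h then horizStartCount T s else 0 := by
  classical
  rw [Ccount, Finset.card_eq_sum_card_fiberwise
    (f := fun t : BarP => t.2.1) (t := Finset.range (i + 1))
    (fun t ht => by
      rw [Finset.mem_coe, Finset.mem_filter] at ht
      show t.2.1 ∈ Finset.range (i + 1)
      rw [Finset.mem_range]
      omega)]
  refine Finset.sum_congr rfl fun s hs => ?_
  rw [Finset.mem_range] at hs
  by_cases hsh : i + 1 < s + h
  · rw [if_pos hsh, horizStartCount]
    congr 1
    ext t
    simp only [Finset.mem_filter]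
    constructor
    · rintro ⟨⟨hT', h1, -⟩, h2⟩; exact ⟨hT', h1, h2⟩
    · rintro ⟨hT', h1, h2⟩; exact ⟨⟨hT', h1, by omega⟩, h2⟩
  · rw [if_neg hsh, Finset.card_eq_zero, Finset.filter_eq_empty_iff]
    intro t ht
    rw [Finset.mem_filter] at ht
    show ¬ t.2.1 = s
    omega

lemma start_zero {a b h v : ℕ} {T : Finset BarP} (hh : 1 ≤ h)
    (hT : IsTilingOf h v (rectR a b) T) {i : ℕ} (hi : a ≤ i) :
    horizStartCount T i = 0 := by
  rw [horizStartCount, Finset.card_eq_zero, Finset.filter_eq_empty_iff]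
  rintro t htT ⟨h1, h2⟩
  have hmem : (t.2.1, t.2.2) ∈ barCells h v t := by
    rw [horiz_mem h1]; exact ⟨rfl, le_refl _, by omega⟩
  have := hT.1 t htT hmem
  simp only [rectR, Finset.mem_product, Finset.mem_range] at this
  omega

lemma start_eq {a b h v : ℕ} (hh : 1 ≤ h) (m : ℕ → ℕ) {T₁ T₂ : Finset BarP}
    (hT₁ : IsTilingOf h v (rectR a b) T₁) (hT₂ : IsTilingOf h v (rectR a b) T₂)
    (hm₁ : ∀ i < a, vertCount T₁ i = m i) (hm₂ : ∀ i < a, vertCount T₂ i = m i) :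
    ∀ i, horizStartCount T₁ i = horizStartCount T₂ i := by
  intro i
  induction i using Nat.strong_induction_on with
  | _ i ih =>
    by_cases hia : i < a
    · have hH : Hcount h T₁ i = Hcount h T₂ i := by
        have e₁ := lemA hT₁ i hia
        have e₂ := lemA hT₂ i hia
        rw [hm₁ i hia] at e₁
        rw [hm₂ i hia] at e₂
        omega
      have hB₁ := lemB (h := h) T₁ i
      have hB₂ := lemB (h := h) T₂ i
      rw [Finset.sum_range_succ] at hB₁ hB₂
      rw [if_pos (by omega : i < i + h)] at hB₁ hB₂
      have hsum : (∑ s ∈ Finset.range i, if i < s + h then horizStartCount T₁ s else 0)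
          = ∑ s ∈ Finset.range i, if i < s + h then horizStartCount T₂ s else 0 := by
        refine Finset.sum_congr rfl fun s hs => ?_
        rw [Finset.mem_range] at hs
        rw [ih s hs]
      omega
    · rw [start_zero hh hT₁ (by omega), start_zero hh hT₂ (by omega)]

/-- Being separated between columns `i` and `i+1` depends only on the column
projections: if one tiling of `R_{a×b}` with column projections `(m_i)` is separated
there, so is every tiling with the same column projections. -/
theorem stmt_14 (a b h v : ℕ) (ha : 1 ≤ a) (hb : 1 ≤ b) (hh : 1 ≤ h) (hv : 1 ≤ v)
    (m : ℕ → ℕ) (T₁ T₂ : Finset BarP)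
    (hT₁ : IsTilingOf h v (rectR a b) T₁) (hT₂ : IsTilingOf h v (rectR a b) T₂)
    (hm₁ : ∀ i < a, vertCount T₁ i = m i) (hm₂ : ∀ i < a, vertCount T₂ i = m i)
    (i : ℕ) (hsep : SeparatedAt h v T₁ i) :
    SeparatedAt h v T₂ i := by
  unfold SeparatedAt at hsep ⊢
  have hC : Ccount h T₁ i = Ccount h T₂ i := by
    rw [lemC (h := h), lemC (h := h)]
    refine Finset.sum_congr rfl fun s _ => ?_
    by_cases hs : i + 1 < s + h
    · rw [if_pos hs, if_pos hs, start_eq hh m hT₁ hT₂ hm₁ hm₂ s]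
    · rw [if_neg hs, if_neg hs]
  have hC₁ : Ccount h T₁ i = 0 := by
    rw [Ccount, Finset.card_eq_zero, Finset.filter_eq_empty_iff]
    rintro t htT ⟨h1, h2, h3⟩
    exact hsep ⟨t, htT, h1, ⟨t.2.2, by rw [horiz_mem h1]; exact ⟨rfl, h2, by omega⟩⟩,
      ⟨t.2.2, by rw [horiz_mem h1]; exact ⟨rfl, by omega, h3⟩⟩⟩
  rintro ⟨t, htT, ht, ⟨j, hj⟩, ⟨j', hj'⟩⟩
  rw [horiz_mem ht] at hj hj'
  have hmem : t ∈ T₂.filter (fun t => t.1 = false ∧ t.2.1 ≤ i ∧ i + 1 < t.2.1 + h) := by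
    rw [Finset.mem_filter]
    exact ⟨htT, ht, hj.2.1, hj'.2.2⟩
  have hzero : Ccount h T₂ i = 0 := hC ▸ hC₁
  rw [Ccount, Finset.card_eq_zero] at hzero
  exact absurd (hzero ▸ hmem) (Finset.notMem_empty t)
end
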